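/- Let ℛ be a left-linear TRS over a signature 𝓕 and let ℛ_g be a growing approximation of ℛ. Then ℛ ∈ CBN-NF_g (i.e., every reducible ground term in 𝒯(𝓕) has an ℛ_g-needed redex) if and only if L(𝒟(ℛ_g)) = ∅, where 𝒟(ℛ_g) is the powerset-pair automaton built from 𝒞'_{NF_{ℛ•}}(ℛ_g). -/

import Mathlib

set_option maxHeartbeats 1000000

/-! ## Terms over a signature -/

/-- Terms over a signature given by a type `F` of function symbols together with
an arity function `ar`; variables are natural numbers. -/
inductive Term (F : Type) (ar : F → ℕ) : Type
  | var : ℕ → Term F ar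
  | app : (f : F) → (Fin (ar f) → Term F ar) → Term F ar

namespace Term

variable {F : Type} {ar : F → ℕ}

/-- The (finite) set of variables of a term. -/
def vars : Term F ar → Finset ℕ
  | var n => {n}
  | app _ ts => Finset.univ.biUnion fun i => (ts i).vars

/-- A term is ground if it contains no variables. -/
def Ground (t : Term F ar) : Prop := t.vars = ∅

/-- The number of occurrences of the variable `n` in a term. -/
def count (n : ℕ) : Term F ar → ℕ
  | var m => if m = n then 1 else 0
  | app _ ts => ∑ i, (ts i).count n

/-- A term is linear if no variable occurs twice in it. -/
def Linear (t : Term F ar) : Prop := ∀ n, t.count n ≤ 1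

/-- Applying a substitution to a term. -/
def subst (σ : ℕ → Term F ar) : Term F ar → Term F ar
  | var n => σ n
  | app f ts => app f fun i => (ts i).subst σ

/-- The subterm at a position (a list of argument indices), if the position is valid. -/
def subtermAt : Term F ar → List ℕ → Option (Term F ar)
  | t, [] => some t
  | var _, _ :: _ => none
  | app f ts, i :: p => if h : i < ar f then (ts ⟨i, h⟩).subtermAt p else none

/-- Replacing the subterm at a position, if the position is valid. -/
def replaceAt : Term F ar → List ℕ → Term F ar → Option (Term F ar)
  | _, [], u => some u
  | var _, _ :: _, _ => none
  | app f ts, i :: p, u =>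
      if h : i < ar f then
        ((ts ⟨i, h⟩).replaceAt p u).map fun s => app f (Function.update ts ⟨i, h⟩ s)
      else none

/-- `s.IsSubtermOf t` : `s` is a subterm of `t`. -/
def IsSubtermOf (s t : Term F ar) : Prop := ∃ p, t.subtermAt p = some s

/-- Relabelling of function symbols along an arity-preserving map of signatures. -/
def relabel {G : Type} {arG : G → ℕ} (φ : F → G) (h : ∀ f, arG (φ f) = ar f) :
    Term F ar → Term G arG
  | var n => var n
  | app f ts => app (φ f) fun i => (ts (Fin.cast (h f) i)).relabel φ h

end Term

/-! ## Rewriting -/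

/-- One-step rewriting with a set of rewrite rules: there are a position `p` of `s`,
a rule `(l, r)` and a substitution `σ` with `s|_p = lσ` and `t = s[rσ]_p`. -/
def Rewrites {F : Type} {ar : F → ℕ} (R : Set (Term F ar × Term F ar))
    (s t : Term F ar) : Prop :=
  ∃ (p : List ℕ) (l r : Term F ar) (σ : ℕ → Term F ar),
    (l, r) ∈ R ∧ s.subtermAt p = some (l.subst σ) ∧ s.replaceAt p (r.subst σ) = some t

/-- Many-step rewriting (reflexive–transitive closure). -/
abbrev RewritesStar {F : Type} {ar : F → ℕ} (R : Set (Term F ar × Term F ar)) :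
    Term F ar → Term F ar → Prop :=
  Relation.ReflTransGen (Rewrites R)

/-- A term rewriting system: a finite set of rules whose left-hand sides are not variables. -/
structure TRS (F : Type) (ar : F → ℕ) where
  rules : Set (Term F ar × Term F ar)
  finite : rules.Finite
  lhs_not_var : ∀ lr ∈ rules, ∀ n, lr.1 ≠ Term.var n

namespace TRS

variable {F : Type} {ar : F → ℕ}

def LeftLinear (R : TRS F ar) : Prop := ∀ lr ∈ R.rules, lr.1.Linear

def RightLinear (R : TRS F ar) : Prop := ∀ lr ∈ R.rules, lr.2.Linear

/-- A TRS is linear if all left- and right-hand sides are linear terms. -/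
def IsLinear (R : TRS F ar) : Prop := R.LeftLinear ∧ R.RightLinear

/-- A TRS is growing if every variable occurring both in the left- and the right-hand
side of a rule occurs at depth 1 in the left-hand side. -/
def Growing (R : TRS F ar) : Prop :=
  ∀ lr ∈ R.rules, ∀ n ∈ lr.1.vars, n ∈ lr.2.vars →
    ∀ (f : F) (ts : Fin (ar f) → Term F ar), lr.1 = Term.app f ts →
      ∀ i, n ∈ (ts i).vars → ts i = Term.var n

/-- A redex is an instance of a left-hand side. -/
def IsRedex (R : TRS F ar) (s : Term F ar) : Prop :=
  ∃ lr ∈ R.rules, ∃ σ : ℕ → Term F ar, s = lr.1.subst σ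

/-- `p` is a redex position of `s`. -/
def RedexPos (R : TRS F ar) (s : Term F ar) (p : List ℕ) : Prop :=
  ∃ u, s.subtermAt p = some u ∧ R.IsRedex u

def Reducible (R : TRS F ar) (s : Term F ar) : Prop := ∃ p, R.RedexPos s p

/-- A term is root-stable if it cannot be rewritten to a redex. -/
def RootStable (R : TRS F ar) (s : Term F ar) : Prop :=
  ¬ ∃ t, RewritesStar R.rules s t ∧ R.IsRedex t

/-- Ground normal forms. -/
def NFset (R : TRS F ar) : Set (Term F ar) := { t | t.Ground ∧ ¬ R.Reducible t }

/-- Ground redexes. -/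
def RedexSet (R : TRS F ar) : Set (Term F ar) := { t | t.Ground ∧ R.IsRedex t }

/-- Root-stable ground terms. -/
def RSset (R : TRS F ar) : Set (Term F ar) := { t | t.Ground ∧ R.RootStable t }

/-- Relabelling a TRS along an arity-preserving map of signatures. -/
def relabel {G : Type} {arG : G → ℕ} (R : TRS F ar) (φ : F → G)
    (h : ∀ f, arG (φ f) = ar f) : TRS G arG where
  rules := (fun lr => (lr.1.relabel φ h, lr.2.relabel φ h)) '' R.rules
  finite := R.finite.image _
  lhs_not_var := by
    rintro lr ⟨lr0, h0, rfl⟩ n hn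
    dsimp only at hn
    cases h1 : lr0.1 with
    | var m => exact absurd h1 (R.lhs_not_var lr0 h0 m)
    | app f ts =>
        rw [h1] at hn
        simp only [Term.relabel] at hn
        cases hn

end TRS

/-! ## Tree automata -/

/-- A transition rule `f(q₁,…,qₙ) → q` of a bottom-up tree automaton. -/
abbrev TARule (F : Type) (ar : F → ℕ) (Q : Type) : Type :=
  (f : F) × ((Fin (ar f) → Q) × Q)

/-- A (finite bottom-up) tree automaton without ε-transitions. -/
structure TreeAutomaton (F : Type) (ar : F → ℕ) (Q : Type) where
  trans : Set (TARule F ar Q)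
  final : Set Q

/-- `Reaches Δ t q` : the ground term `t` rewrites to the state `q` using the
transition rules `Δ`. -/
inductive Reaches {F : Type} {ar : F → ℕ} {Q : Type} (Δ : Set (TARule F ar Q)) :
    Term F ar → Q → Prop
  | app {f : F} {ts : Fin (ar f) → Term F ar} {qs : Fin (ar f) → Q} {q : Q} :
      (∀ i, Reaches Δ (ts i) (qs i)) → (⟨f, qs, q⟩ : TARule F ar Q) ∈ Δ →
      Reaches Δ (Term.app f ts) q

/-- `ReachesT Δ θ t q` : the term `t`, whose variables are interpreted as the states
given by `θ`, rewrites to the state `q` using the transition rules `Δ`. -/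
inductive ReachesT {F : Type} {ar : F → ℕ} {Q : Type} (Δ : Set (TARule F ar Q))
    (θ : ℕ → Q) : Term F ar → Q → Prop
  | var (n : ℕ) : ReachesT Δ θ (Term.var n) (θ n)
  | app {f : F} {ts : Fin (ar f) → Term F ar} {qs : Fin (ar f) → Q} {q : Q} :
      (∀ i, ReachesT Δ θ (ts i) (qs i)) → (⟨f, qs, q⟩ : TARule F ar Q) ∈ Δ →
      ReachesT Δ θ (Term.app f ts) q

/-- The language of a tree automaton: all ground terms reaching a final state. -/
def Lang {F : Type} {ar : F → ℕ} {Q : Type} (A : TreeAutomaton F ar Q) :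
    Set (Term F ar) :=
  { t | t.Ground ∧ ∃ q ∈ A.final, Reaches A.trans t q }

/-- A set of ground terms is recognizable if it is the language of some finite
tree automaton. -/
def Recognizable {F : Type} {ar : F → ℕ} (T : Set (Term F ar)) : Prop :=
  ∃ (Q : Type) (_ : Fintype Q) (A : TreeAutomaton F ar Q), T = Lang A

/-- The set of states occurring in a set of transition rules. -/
def statesOf {F : Type} {ar : F → ℕ} {Q : Type} (Γ : Set (TARule F ar Q)) : Set Q :=
  { q | ∃ ρ ∈ Γ, ρ.2.2 = q ∨ ∃ i, ρ.2.1 i = q }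

/-! ## The automaton `ℬ(ℛ)` -/

/-- The canonical representative of the state `⟨t⟩` of `ℬ(ℛ)`: all variables are
identified with the single state `⟨x⟩`, represented by `var 0`. -/
def stPattern {F : Type} {ar : F → ℕ} : Term F ar → Term F ar
  | Term.var _ => Term.var 0
  | Term.app f ts => Term.app f ts

/-- `S_ℛ`: the set of all subterms of arguments of left-hand sides of `ℛ`. -/
def SR {F : Type} {ar : F → ℕ} (R : TRS F ar) : Set (Term F ar) :=
  { s | ∃ lr ∈ R.rules, ∃ (f : F) (ts : Fin (ar f) → Term F ar),
        lr.1 = Term.app f ts ∧ ∃ i, s.IsSubtermOf (ts i) }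

/-- The representatives of the states of `ℬ(ℛ)`: the patterns of terms of `S_ℛ`,
together with `⟨x⟩`. -/
def BStateSet {F : Type} {ar : F → ℕ} (R : TRS F ar) : Set (Term F ar) :=
  stPattern '' SR R ∪ {Term.var 0}

/-- The matching rules of `ℬ(ℛ)` (with states encoded by `enc`):
`f(⟨t₁⟩,…,⟨tₙ⟩) → ⟨t⟩` for every `t = f(t₁,…,tₙ) ∈ S_ℛ`. -/
def BMatch {F : Type} {ar : F → ℕ} {Q : Type} (R : TRS F ar) (enc : Term F ar → Q) :
    Set (TARule F ar Q) :=
  { ρ | ∃ (f : F) (ts : Fin (ar f) → Term F ar), Term.app f ts ∈ SR R ∧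
        ρ = ⟨f, fun i => enc (stPattern (ts i)), enc (Term.app f ts)⟩ }

/-- The propagation rules `f(⟨x⟩,…,⟨x⟩) → ⟨x⟩` for every function symbol `f`. -/
def BProp {F : Type} {ar : F → ℕ} {Q : Type} (enc : Term F ar → Q) :
    Set (TARule F ar Q) :=
  { ρ | ∃ f : F, ρ = ⟨f, fun _ => enc (Term.var 0), enc (Term.var 0)⟩ }

/-- The transition rules of the automaton `ℬ(ℛ)`. -/
def BTrans {F : Type} {ar : F → ℕ} {Q : Type} (R : TRS F ar) (enc : Term F ar → Q) :
    Set (TARule F ar Q) :=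
  BMatch R enc ∪ BProp enc

/-- `Σ(t)`: the set of ground instances of the term `t`. -/
def GInst {F : Type} {ar : F → ℕ} (t : Term F ar) : Set (Term F ar) :=
  { s | s.Ground ∧ ∃ σ, s = t.subst σ }

/-! ## Saturation -/

/-- The state `qᵢ` associated to the argument `lᵢ` of a left-hand side in the
saturation rule: `lᵢθ` if `lᵢ` is a variable occurring in `r` (whose variable set
is `rv`), and `⟨lᵢ⟩` otherwise. -/
def satArg {F : Type} {ar : F → ℕ} {Q : Type} (enc : Term F ar → Q) (θ : ℕ → Q)
    (rv : Finset ℕ) : Term F ar → Q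
  | Term.var n => if n ∈ rv then θ n else enc (Term.var 0)
  | Term.app f ts => enc (Term.app f ts)

/-- One step of the saturation process: add all transition rules `f(q₁,…,qₙ) → q`
obtained from a rewrite rule `f(l₁,…,lₙ) → r` and a state substitution `θ`
(with values among the states `Qc` of the automaton) such that `rθ →_Γ* q`. -/
def satStep {F : Type} {ar : F → ℕ} {Q : Type} (R : TRS F ar) (enc : Term F ar → Q)
    (Qc : Set Q) (Γ : Set (TARule F ar Q)) : Set (TARule F ar Q) :=
  Γ ∪ { ρ | ∃ (f : F) (ls : Fin (ar f) → Term F ar) (r : Term F ar) (θ : ℕ → Q) (q : Q),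
        (Term.app f ls, r) ∈ R.rules ∧ (∀ n ∈ r.vars, θ n ∈ Qc) ∧ ReachesT Γ θ r q ∧
        ρ = ⟨f, fun i => satArg enc θ r.vars (ls i), q⟩ }

/-- The saturated set of transition rules: the closure of `Γ0` under the saturation
inference rule. -/
def satGamma {F : Type} {ar : F → ℕ} {Q : Type} (R : TRS F ar) (enc : Term F ar → Q)
    (Qc : Set Q) (Γ0 : Set (TARule F ar Q)) : Set (TARule F ar Q) :=
  ⋃ n, (satStep R enc Qc)^[n] Γ0

/-! ## The automaton `𝒞_T(ℛ)` and its extension `𝒞'_T(ℛ)` -/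

/-- The data of the construction of the automaton `𝒞_T(ℛ)`: an automaton `𝒜_T`
recognizing `T` with all states accessible and state set `QA`, together with an
encoding `enc` of the states `⟨t⟩` of `ℬ(ℛ)` into the common state type `Q`, such
that every state common to `𝒜_T` and `ℬ(ℛ)` accepts the same set of terms in both
automata. -/
structure CSetup {G : Type} [Fintype G] {arG : G → ℕ} (Q : Type) [Fintype Q]
    (Rg : TRS G arG) (T : Set (Term G arG)) where
  enc : Term G arG → Q
  A : TreeAutomaton G arG Q
  QA : Set Q
  henc : Set.InjOn enc (BStateSet Rg)
  hAstates : ∀ ρ ∈ A.trans, ρ.2.2 ∈ QA ∧ ∀ i, ρ.2.1 i ∈ QA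
  hfinal : A.final ⊆ QA
  hacc : ∀ q ∈ QA, ∃ s : Term G arG, s.Ground ∧ Reaches A.trans s q
  hground : ∃ s : Term G arG, s.Ground
  hshared : ∀ q ∈ QA ∩ enc '' BStateSet Rg, ∀ s : Term G arG,
      Reaches A.trans s q ↔ Reaches (BTrans Rg enc) s q
  hT : T = Lang A

namespace CSetup

variable {G : Type} [Fintype G] {arG : G → ℕ} {Q : Type} [Fintype Q]
  {Rg : TRS G arG} {T : Set (Term G arG)}

/-- The set of states of the automaton `𝒞_T(ℛ)`. -/
def Qstates (C : CSetup Q Rg T) : Set Q := C.QA ∪ C.enc '' BStateSet Rg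

/-- The transition rules of `𝒞_T(ℛ)` before saturation: the union of `𝒜_T` and `ℬ(ℛ)`. -/
def Γ0 (C : CSetup Q Rg T) : Set (TARule G arG Q) := C.A.trans ∪ BTrans Rg C.enc

/-- The transition rules of `𝒞_T(ℛ)` after saturation. -/
def Γsat (C : CSetup Q Rg T) : Set (TARule G arG Q) :=
  satGamma Rg C.enc C.Qstates C.Γ0

end CSetup

/-- The redex rules `f(⟪l₁⟫,…,⟪lₙ⟫) → q_r` for every left-hand side `f(l₁,…,lₙ)`. -/
def RedexRules {F : Type} {ar : F → ℕ} {Q : Type} (R : TRS F ar)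
    (enc2 : Term F ar → Q) (qr : Q) : Set (TARule F ar Q) :=
  { ρ | ∃ (f : F) (ls : Fin (ar f) → Term F ar) (r : Term F ar),
        (Term.app f ls, r) ∈ R.rules ∧
        ρ = ⟨f, fun i => enc2 (stPattern (ls i)), qr⟩ }

/-- The rules `f(⟨x⟩,…,q_r,…,⟨x⟩) → q_r`. -/
def QrProp {F : Type} {ar : F → ℕ} {Q : Type} (enc : Term F ar → Q) (qr : Q) :
    Set (TARule F ar Q) :=
  { ρ | ∃ (f : F) (j : Fin (ar f)),
        ρ = ⟨f, fun i => if i = j then qr else enc (Term.var 0), qr⟩ }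

/-- The data of the construction of the automaton `𝒞'_T(ℛ)`: `𝒞_T(ℛ)` extended with
a fresh copy `⟪t⟫` (encoded by `enc2`, with `⟪x⟫ = ⟨x⟩`) of the states of `ℬ(ℛ)` and
a fresh state `q_r`. -/
structure CpSetup {G : Type} [Fintype G] {arG : G → ℕ} (Q : Type) [Fintype Q]
    (Rg : TRS G arG) (T : Set (Term G arG)) extends CSetup Q Rg T where
  enc2 : Term G arG → Q
  qr : Q
  henc2 : Set.InjOn enc2 (BStateSet Rg)
  hx : enc2 (Term.var 0) = enc (Term.var 0)
  hfresh : (enc2 '' (BStateSet Rg \ {Term.var 0}) ∪ {qr}) ∩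
              (QA ∪ enc '' BStateSet Rg) = ∅
  hqr : qr ∉ enc2 '' (BStateSet Rg \ {Term.var 0})

namespace CpSetup

variable {G : Type} [Fintype G] {arG : G → ℕ} {Q : Type} [Fintype Q]
  {Rg : TRS G arG} {T : Set (Term G arG)}

/-- The transition rules `Γ'` of the automaton `𝒞'_T(ℛ)`. -/
def Γ' (C : CpSetup Q Rg T) : Set (TARule G arG Q) :=
  C.toCSetup.Γsat ∪ BMatch Rg C.enc2 ∪ RedexRules Rg C.enc2 C.qr ∪ QrProp C.enc C.qr

end CpSetup

/-! ## The signature `𝓖 = 𝓕 ∪ {•}` -/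

/-- The arity function of the extended signature `𝓕 ∪ {•}` (with `•` the fresh
constant `none`). -/
def arB {F : Type} (ar : F → ℕ) : Option F → ℕ
  | none => 0
  | some f => ar f

/-- The term `•`. -/
def bulletTm {F : Type} {ar : F → ℕ} : Term (Option F) (arB ar) :=
  Term.app none Fin.elim0

/-- The embedding of `𝒯(𝓕)`-terms into terms over `𝓕 ∪ {•}`. -/
def liftB {F : Type} {ar : F → ℕ} : Term F ar → Term (Option F) (arB ar) :=
  Term.relabel some (fun _ => rfl)

/-- A TRS over `𝓕` viewed as a TRS over `𝓕 ∪ {•}`. -/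
def TRS.liftB {F : Type} {ar : F → ℕ} (R : TRS F ar) : TRS (Option F) (arB ar) :=
  R.relabel some (fun _ => rfl)

/-- The TRS `ℛ• = ℛ ∪ {• → •}` over the signature `𝓕 ∪ {•}`. -/
def TRS.bullet {F : Type} {ar : F → ℕ} (R : TRS F ar) : TRS (Option F) (arB ar) where
  rules := R.liftB.rules ∪ {(bulletTm, bulletTm)}
  finite := R.liftB.finite.union (Set.finite_singleton _)
  lhs_not_var := by
    rintro lr (h | h) n hn
    · exact R.liftB.lhs_not_var lr h n hn
    · rw [Set.mem_singleton_iff] at h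
      rw [h] at hn
      simp [bulletTm] at hn

/-! ## The automaton `𝒟(ℛ)` -/

/-- For a symbol `g` and sets of states `Ss` for the arguments, the set
`g(S₁,…,Sₙ)↓` of states reachable from `g` applied to states chosen from the `Ssᵢ`. -/
def oneStep {G : Type} {arG : G → ℕ} {Q : Type} (Γ : Set (TARule G arG Q)) (g : G)
    (Ss : Fin (arG g) → Set Q) : Set Q :=
  { q | ∃ qs : Fin (arG g) → Q, (∀ i, qs i ∈ Ss i) ∧ (⟨g, qs, q⟩ : TARule G arG Q) ∈ Γ }

/-- `t↓` for a ground term `t`: the set of states reachable from `t`. -/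
def dn {G : Type} {arG : G → ℕ} {Q : Type} (Γ : Set (TARule G arG Q))
    (t : Term G arG) : Set Q :=
  { q | Reaches Γ t q }

/-- There is a rewrite rule with left-hand side `g(l₁,…,lₙ)` such that
`⟪lᵢ⟫ ∈ Ssᵢ` for all `i`. -/
def LhsMatch {G : Type} {arG : G → ℕ} {Q : Type} (Rg : TRS G arG)
    (enc2 : Term G arG → Q) (g : G) (Ss : Fin (arG g) → Set Q) : Prop :=
  ∃ (ls : Fin (arG g) → Term G arG) (r : Term G arG),
    (Term.app g ls, r) ∈ Rg.rules ∧ ∀ i, enc2 (stPattern (ls i)) ∈ Ss i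

/-- The transition rules of the automaton `𝒟(ℛ)` over `𝓕`, built from the transition
rules `Γ'` of `𝒞'_{NF}(ℛ)` over `𝓕 ∪ {•}`. -/
def DTrans {F : Type} {ar : F → ℕ} {Q : Type} (Rb : TRS (Option F) (arB ar))
    (Γ' : Set (TARule (Option F) (arB ar) Q))
    (enc enc2 : Term (Option F) (arB ar) → Q) :
    Set (TARule F ar (Set Q × Set Q)) :=
  { ρ | ∃ (f : F) (SP : Fin (ar f) → Set Q × Set Q) (P1 P2 : Set Q),
      P1 ⊆ (⋃ i : Fin (ar f), oneStep Γ' (some f)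
              (fun j => @ite _ (j = i) (instDecidableEqFin _ j i) (SP j).2 (SP j).1)) ∧
      (∀ (i : Fin (ar f)), ∀ q ∈ (SP i).2,
        (P1 ∩ oneStep Γ' (some f) (fun j => @ite _ (j = i) (instDecidableEqFin _ j i) {q} (SP j).1)).Nonempty) ∧
      ((LhsMatch Rb enc2 (some f) (fun i => (SP i).1) ∧ P2 = {enc (Term.var 0)}) ∨
       (¬ LhsMatch Rb enc2 (some f) (fun i => (SP i).1) ∧ P2 = (∅ : Set Q))) ∧
      ρ = ⟨f, SP, (oneStep Γ' (some f) (fun i => (SP i).1), P1 ∪ P2)⟩ }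

/-- The automaton `𝒟(ℛ)`: final states are the pairs `[S,P]` with `q_r ∈ S` and
`P ⊆ Q_f`. -/
def DAutomaton {F : Type} {ar : F → ℕ} {Q : Type} (Rb : TRS (Option F) (arB ar))
    (Γ' : Set (TARule (Option F) (arB ar) Q))
    (enc enc2 : Term (Option F) (arB ar) → Q) (qr : Q) (Qf : Set Q) :
    TreeAutomaton F ar (Set Q × Set Q) where
  trans := DTrans Rb Γ' enc enc2
  final := { SP | qr ∈ SP.1 ∧ SP.2 ⊆ Qf }

/-! ## Growing approximations -/

/-- `VarRepl t t'` : `t'` is obtained from `t` by replacing occurrences of variables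
by (possibly other) variables. -/
inductive VarRepl {F : Type} {ar : F → ℕ} : Term F ar → Term F ar → Prop
  | var (n m : ℕ) : VarRepl (Term.var n) (Term.var m)
  | app (f : F) (ts ts' : Fin (ar f) → Term F ar) :
      (∀ i, VarRepl (ts i) (ts' i)) → VarRepl (Term.app f ts) (Term.app f ts')

/-- `Rg` is a growing approximation of `R`: a right-linear growing TRS obtained from
`R` by replacing, in each right-hand side, occurrences of variables by variables not
occurring in the corresponding left-hand side. -/
def IsGrowingApprox {F : Type} {ar : F → ℕ} (R Rg : TRS F ar) : Prop :=
  Rg.RightLinear ∧ Rg.Growing ∧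
  (∀ lr ∈ Rg.rules, ∃ lr' ∈ R.rules, lr.1 = lr'.1 ∧ VarRepl lr'.2 lr.2 ∧
      ∀ n ∈ lr.2.vars, n ∉ lr.1.vars) ∧
  (∀ lr ∈ R.rules, ∃ lr' ∈ Rg.rules, lr.1 = lr'.1 ∧ VarRepl lr.2 lr'.2 ∧
      ∀ n ∈ lr'.2.vars, n ∉ lr'.1.vars)

/-! ## The signature `𝓖 = 𝓕 ∪ {f° : f ∈ 𝓕}` -/

/-- The arity function of the signature `𝓕 ∪ {f° : f ∈ 𝓕}` (`inl f` is `f`,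
`inr f` is `f°`). -/
def arC {F : Type} (ar : F → ℕ) : F ⊕ F → ℕ
  | Sum.inl f => ar f
  | Sum.inr f => ar f

/-- The embedding of `𝒯(𝓕)`-terms into terms over `𝓕 ∪ {f° : f ∈ 𝓕}`. -/
def liftC {F : Type} {ar : F → ℕ} : Term F ar → Term (F ⊕ F) (arC ar) :=
  Term.relabel Sum.inl (fun _ => rfl)

/-- `t°`: mark the root symbol of `t`. -/
def circTm {F : Type} {ar : F → ℕ} : Term F ar → Term (F ⊕ F) (arC ar)
  | Term.var n => Term.var n
  | Term.app f ts => Term.app (Sum.inr f) fun i => liftC (ts i)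

/-- A TRS over `𝓕` viewed as a TRS over `𝓕 ∪ {f° : f ∈ 𝓕}`. -/
def TRS.liftC {F : Type} {ar : F → ℕ} (R : TRS F ar) : TRS (F ⊕ F) (arC ar) :=
  R.relabel Sum.inl (fun _ => rfl)

/-- The TRS `𝒮° = 𝒮 ∪ {l° → r | l → r ∈ 𝒮}` over the signature `𝓕 ∪ {f° : f ∈ 𝓕}`. -/
def TRS.circ {F : Type} {ar : F → ℕ} (S : TRS F ar) : TRS (F ⊕ F) (arC ar) where
  rules := S.liftC.rules ∪ (fun lr => (circTm lr.1, _root_.liftC lr.2)) '' S.rules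
  finite := S.liftC.finite.union (S.finite.image _)
  lhs_not_var := by
    rintro lr (h | ⟨lr0, h0, rfl⟩) n hn
    · exact S.liftC.lhs_not_var lr h n hn
    · dsimp only at hn
      cases h1 : lr0.1 with
      | var m => exact absurd h1 (S.lhs_not_var lr0 h0 m)
      | app f ts =>
          rw [h1] at hn
          simp only [circTm] at hn
          cases hn

/-- The transitions added to `ℬ(𝒮°)` to obtain `𝒜_{REDEX_{𝒮°}}`:
`f(⟨l₁⟩,…,⟨lₙ⟩) → q_f` and `f°(⟨l₁⟩,…,⟨lₙ⟩) → q_f` for each left-hand side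
`f(l₁,…,lₙ)` of a rule of `𝒮`. -/
def CircRedexRules {F : Type} {ar : F → ℕ} {Q : Type} (S : TRS F ar)
    (enc : Term (F ⊕ F) (arC ar) → Q) (qf : Q) : Set (TARule (F ⊕ F) (arC ar) Q) :=
  { ρ | ∃ (f : F) (ls : Fin (ar f) → Term F ar) (r : Term F ar),
      (Term.app f ls, r) ∈ S.rules ∧
      (ρ = ⟨Sum.inl f, fun i => enc (stPattern (liftC (ls i))), qf⟩ ∨
       ρ = ⟨Sum.inr f, fun i => enc (stPattern (liftC (ls i))), qf⟩) }

/-! ## The automaton `𝒟'(ℛ,𝒮)` -/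

/-- The data of the construction of `𝒞'_{RS_{𝒮°}}(ℛ)`: the saturated automaton
`𝒞_{RS_{𝒮°}}(ℛ)`, a fresh copy `⟪t⟫` (encoded by `enc2`, with `⟪x⟫ = ⟨x⟩`) of the
states of `ℬ(ℛ)`, and an automaton `𝒞_{REDEX_𝒮}(𝒮)` (transitions `Etrans`, final
states `Qf'`) recognizing the non-`𝒮`-root-stable ground terms of `𝒯(𝓕)`. -/
structure CrsSetup {F : Type} [Fintype F] {ar : F → ℕ} (Q : Type) [Fintype Q]
    (R S : TRS F ar) extends CSetup Q R.liftC (TRS.RSset S.circ) where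
  enc2 : Term (F ⊕ F) (arC ar) → Q
  henc2 : Set.InjOn enc2 (BStateSet R.liftC)
  hx : enc2 (Term.var 0) = enc (Term.var 0)
  hfresh2 : (enc2 '' (BStateSet R.liftC \ {Term.var 0})) ∩
              (QA ∪ enc '' BStateSet R.liftC) = ∅
  Etrans : Set (TARule (F ⊕ F) (arC ar) Q)
  Qf' : Set Q
  hQf' : Qf' ⊆ statesOf Etrans
  hEfresh : statesOf Etrans ∩
      (QA ∪ enc '' BStateSet R.liftC ∪ enc2 '' (BStateSet R.liftC \ {Term.var 0})) = ∅
  hE : ∀ t : Term (F ⊕ F) (arC ar),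
      (t.Ground ∧ ∃ q ∈ Qf', Reaches Etrans t q) ↔
      (∃ s : Term F ar, t = liftC s ∧ s.Ground ∧ ¬ S.RootStable s)

namespace CrsSetup

variable {F : Type} [Fintype F] {ar : F → ℕ} {Q : Type} [Fintype Q] {R S : TRS F ar}

/-- The transition rules `Γ'` of the automaton `𝒞'_{RS_{𝒮°}}(ℛ)`. -/
def Γ' (C : CrsSetup Q R S) : Set (TARule (F ⊕ F) (arC ar) Q) :=
  C.toCSetup.Γsat ∪ BMatch R.liftC C.enc2 ∪ C.Etrans

end CrsSetup

/-- The transition rules of the automaton `𝒟'(ℛ,𝒮)` over `𝓕`, built from the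
transition rules `Γ'` of `𝒞'_{RS_{𝒮°}}(ℛ)`. -/
def DTransRS {F : Type} {ar : F → ℕ} {Q : Type} (Rg : TRS (F ⊕ F) (arC ar))
    (Γ' : Set (TARule (F ⊕ F) (arC ar) Q)) (enc2 : Term (F ⊕ F) (arC ar) → Q) :
    Set (TARule F ar (Set Q × Set Q)) :=
  { ρ | ∃ (f : F) (SP : Fin (ar f) → Set Q × Set Q) (P1 P2 : Set Q),
      P1 ⊆ (⋃ i : Fin (ar f), oneStep Γ' (Sum.inl f)
              (fun j => @ite _ (j = i) (instDecidableEqFin _ j i) (SP j).2 (SP j).1)) ∧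
      (∀ (i : Fin (ar f)), ∀ q ∈ (SP i).2,
        (P1 ∩ oneStep Γ' (Sum.inl f) (fun j => @ite _ (j = i) (instDecidableEqFin _ j i) {q} (SP j).1)).Nonempty) ∧
      ((LhsMatch Rg enc2 (Sum.inl f) (fun i => (SP i).1) ∧ P2.Nonempty ∧
          P2 ⊆ oneStep Γ' (Sum.inr f) (fun i => (SP i).1)) ∨
       (¬ LhsMatch Rg enc2 (Sum.inl f) (fun i => (SP i).1) ∧ P2 = (∅ : Set Q))) ∧
      ρ = ⟨f, SP, (oneStep Γ' (Sum.inl f) (fun i => (SP i).1), P1 ∪ P2)⟩ }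

/-- The automaton `𝒟'(ℛ,𝒮)`: final states are the pairs `[S,P]` with
`S ∩ Q_f' ≠ ∅` and `P ⊆ Q_f`. -/
def DAutomatonRS {F : Type} {ar : F → ℕ} {Q : Type} (Rg : TRS (F ⊕ F) (arC ar))
    (Γ' : Set (TARule (F ⊕ F) (arC ar) Q)) (enc2 : Term (F ⊕ F) (arC ar) → Q)
    (Qf' Qf : Set Q) : TreeAutomaton F ar (Set Q × Set Q) where
  trans := DTransRS Rg Γ' enc2
  final := { SP | (SP.1 ∩ Qf').Nonempty ∧ SP.2 ⊆ Qf }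

/-!
`𝒟(ℛ_g)` accepts exactly the reducible ground terms without an `ℛ_g`-needed redex, and the
theorem is a reformulation of this. If `s` reaches `[S,P]`, then `S = s↓` in `𝒞'`, so
`q_r ∈ S` says that `s` has a redex, while `P` collects, for every redex position `p`, states
reached by `s[•]_p`; `P ⊆ Q_f` says that every `s[•]_p` reaches a final state of `𝒜_{NF}`.
Because `ℛ_g` is linear and its right-hand sides share no variable with its left-hand
sides, saturation is sound and complete: a ground term reaches a final state of `𝒜_{NF}` in
the saturated automaton iff it rewrites to a normal form. So `s[•]_p` reaches `Q_f` iff the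
redex at `p` is not needed.
-/

/-! ## Terms, rewriting and tree automata -/

namespace Term

variable {F : Type} {ar : F → ℕ}

theorem ground_app_iff {f : F} {ts : Fin (ar f) → Term F ar} :
    (app f ts).Ground ↔ ∀ i, (ts i).Ground := by
  simp only [Ground, vars, Finset.eq_empty_iff_forall_notMem, Finset.mem_biUnion,
    Finset.mem_univ, true_and, not_exists]
  exact forall_comm

theorem not_ground_var (n : ℕ) : ¬ (var n : Term F ar).Ground := by
  simp [Ground, vars]

theorem mem_vars_iff_count_pos {t : Term F ar} {n : ℕ} : n ∈ t.vars ↔ 0 < t.count n := by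
  induction t with
  | var m => by_cases h : m = n <;> simp [vars, count, h, Ne.symm]
  | app f ts ih => simp [vars, count, Finset.sum_pos_iff, ih]

theorem Linear.arg {f : F} {ts : Fin (ar f) → Term F ar} (h : (app f ts).Linear)
    (i : Fin (ar f)) : (ts i).Linear := fun n =>
  (Finset.single_le_sum (f := fun j => (ts j).count n) (fun _ _ => Nat.zero_le _)
    (Finset.mem_univ i)).trans (h n)

theorem Linear.eq_of_mem_vars {f : F} {ts : Fin (ar f) → Term F ar} (h : (app f ts).Linear)
    {n : ℕ} {i j : Fin (ar f)} (hi : n ∈ (ts i).vars) (hj : n ∈ (ts j).vars) : i = j := by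
  by_contra hne
  have hpair : (ts i).count n + (ts j).count n ≤ ∑ k, (ts k).count n := by
    rw [← Finset.sum_pair (f := fun k => (ts k).count n) hne]
    exact Finset.sum_le_sum_of_subset (Finset.subset_univ _)
  have := h n
  rw [mem_vars_iff_count_pos] at hi hj
  simp only [count] at this
  omega

theorem subst_congr {t : Term F ar} {σ σ' : ℕ → Term F ar}
    (h : ∀ n ∈ t.vars, σ n = σ' n) : t.subst σ = t.subst σ' := by
  induction t with
  | var n => exact h n (Finset.mem_singleton_self n)
  | app f ts ih =>
      exact congrArg (app f) (funext fun i => ih i fun n hn =>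
        h n (Finset.mem_biUnion.2 ⟨i, Finset.mem_univ i, hn⟩))

theorem subst_subst (t : Term F ar) (σ τ : ℕ → Term F ar) :
    (t.subst σ).subst τ = t.subst (fun n => (σ n).subst τ) := by
  induction t with
  | var n => rfl
  | app f ts ih => exact congrArg (app f) (funext ih)

theorem Ground.subst_eq {t : Term F ar} (h : t.Ground) (σ : ℕ → Term F ar) :
    t.subst σ = t := by
  induction t with
  | var n => exact absurd h (not_ground_var n)
  | app f ts ih => exact congrArg (app f) (funext fun i => ih i (ground_app_iff.1 h i))

theorem ground_subst {t : Term F ar} {σ : ℕ → Term F ar} (h : ∀ n, (σ n).Ground) :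
    (t.subst σ).Ground := by
  induction t with
  | var n => exact h n
  | app f ts ih => exact ground_app_iff.2 ih

/-- By linearity the argument substitutions act on disjoint variables, so they glue. -/
theorem Linear.exists_subst_app {f : F} {ls ws : Fin (ar f) → Term F ar}
    (hlin : (app f ls).Linear) (h : ∀ i, ∃ σ, ws i = (ls i).subst σ) :
    ∃ σ, app f ws = (app f ls).subst σ := by
  classical
  choose σs hσs using h
  refine ⟨fun m => if hm : ∃ i, m ∈ (ls i).vars then σs hm.choose m else var m,
    congrArg (app f) (funext fun i => (hσs i).trans (subst_congr fun m hm => ?_))⟩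
  have hex : ∃ j, m ∈ (ls j).vars := ⟨i, hm⟩
  rw [dif_pos hex, hlin.eq_of_mem_vars hex.choose_spec hm]

theorem subtermAt_nil (t : Term F ar) : t.subtermAt [] = some t := by
  cases t <;> rfl

theorem replaceAt_nil (t u : Term F ar) : t.replaceAt [] u = some u := by
  cases t <;> rfl

theorem subtermAt_cons {f : F} (ts : Fin (ar f) → Term F ar) (i : Fin (ar f)) (p : List ℕ) :
    (app f ts).subtermAt ((i : ℕ) :: p) = (ts i).subtermAt p := by
  simp [subtermAt]

theorem replaceAt_cons {f : F} (ts : Fin (ar f) → Term F ar) (i : Fin (ar f)) (p : List ℕ)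
    (u : Term F ar) : (app f ts).replaceAt ((i : ℕ) :: p) u =
      ((ts i).replaceAt p u).map fun s => app f (Function.update ts i s) := by
  simp [replaceAt]

theorem subtermAt_cons_eq_some {f : F} {ts : Fin (ar f) → Term F ar} {i : ℕ} {p : List ℕ}
    {a : Term F ar} : (app f ts).subtermAt (i :: p) = some a ↔
      ∃ h : i < ar f, (ts ⟨i, h⟩).subtermAt p = some a := by
  simp only [subtermAt]
  split <;> simp_all

theorem subtermAt_append {t a c : Term F ar} {p p' : List ℕ}
    (h : t.subtermAt p = some a) (h' : a.subtermAt p' = some c) :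
    t.subtermAt (p ++ p') = some c := by
  induction p generalizing t with
  | nil => rw [subtermAt_nil, Option.some.injEq] at h; exact h ▸ h'
  | cons i p ih =>
      cases t with
      | var n => simp [subtermAt] at h
      | app f ts =>
          obtain ⟨hi, h⟩ := subtermAt_cons_eq_some.1 h
          exact subtermAt_cons_eq_some.2 ⟨hi, ih h⟩

theorem Ground.subtermAt {t a : Term F ar} {p : List ℕ} (hg : t.Ground)
    (h : t.subtermAt p = some a) : a.Ground := by
  induction p generalizing t with
  | nil => rw [subtermAt_nil, Option.some.injEq] at h; exact h ▸ hg
  | cons i p ih =>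
      cases t with
      | var n => simp [Term.subtermAt] at h
      | app f ts =>
          obtain ⟨hi, h⟩ := subtermAt_cons_eq_some.1 h
          exact ih (ground_app_iff.1 hg _) h

theorem Linear.subtermAt {t a : Term F ar} {p : List ℕ} (hl : t.Linear)
    (h : t.subtermAt p = some a) : a.Linear := by
  induction p generalizing t with
  | nil => rw [subtermAt_nil, Option.some.injEq] at h; exact h ▸ hl
  | cons i p ih =>
      cases t with
      | var n => simp [Term.subtermAt] at h
      | app f ts =>
          obtain ⟨hi, h⟩ := subtermAt_cons_eq_some.1 h
          exact ih (hl.arg _) h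

theorem Ground.replaceAt {t u t' : Term F ar} {p : List ℕ} (hg : t.Ground) (hu : u.Ground)
    (h : t.replaceAt p u = some t') : t'.Ground := by
  induction p generalizing t t' with
  | nil => rw [replaceAt_nil, Option.some.injEq] at h; exact h ▸ hu
  | cons i p ih =>
      cases t with
      | var n => simp [Term.replaceAt] at h
      | app f ts =>
          simp only [Term.replaceAt] at h
          split at h
          · obtain ⟨s, hs, rfl⟩ := Option.map_eq_some_iff.1 h
            refine ground_app_iff.2 fun j => ?_
            rcases eq_or_ne j ⟨i, ‹_›⟩ with rfl | hne
            · simpa using ih (ground_app_iff.1 hg _) hs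
            · simpa [hne] using ground_app_iff.1 hg j
          · simp at h

theorem subtermAt_subst {t a : Term F ar} {p : List ℕ} (σ : ℕ → Term F ar)
    (h : t.subtermAt p = some a) : (t.subst σ).subtermAt p = some (a.subst σ) := by
  induction p generalizing t with
  | nil => rw [subtermAt_nil, Option.some.injEq] at h; rw [h, subtermAt_nil]
  | cons i p ih =>
      cases t with
      | var n => simp [Term.subtermAt] at h
      | app f ts =>
          obtain ⟨hi, h⟩ := subtermAt_cons_eq_some.1 h
          exact subtermAt_cons_eq_some.2 ⟨hi, ih h⟩

theorem replaceAt_subst {t u t' : Term F ar} {p : List ℕ} (σ : ℕ → Term F ar)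
    (h : t.replaceAt p u = some t') :
    (t.subst σ).replaceAt p (u.subst σ) = some (t'.subst σ) := by
  induction p generalizing t t' with
  | nil => rw [replaceAt_nil, Option.some.injEq] at h; rw [h, replaceAt_nil]
  | cons i p ih =>
      cases t with
      | var n => simp [Term.replaceAt] at h
      | app f ts =>
          simp only [Term.replaceAt, Term.subst] at h ⊢
          split at h
          · rw [dif_pos ‹_›]
            obtain ⟨s, hs, rfl⟩ := Option.map_eq_some_iff.1 h
            rw [ih hs]
            simp only [Option.map_some, Option.some.injEq, Term.subst]
            congr 1
            funext j
            rcases eq_or_ne j ⟨i, ‹_›⟩ with rfl | hne <;> simp [*]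
          · simp at h

end Term

open Term

section Rewriting

variable {F : Type} {ar : F → ℕ} {Rr : Set (Term F ar × Term F ar)}

theorem Rewrites.subst {s t : Term F ar} (h : Rewrites Rr s t) (γ : ℕ → Term F ar) :
    Rewrites Rr (s.subst γ) (t.subst γ) := by
  obtain ⟨p, l, r, σ, hR, hsub, hrep⟩ := h
  refine ⟨p, l, r, fun n => (σ n).subst γ, hR, ?_, ?_⟩
  · rw [← subst_subst]
    exact subtermAt_subst γ hsub
  · rw [← subst_subst]
    exact replaceAt_subst γ hrep

theorem Rewrites.app_update {f : F} {ts : Fin (ar f) → Term F ar} {i : Fin (ar f)}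
    {t' : Term F ar} (h : Rewrites Rr (ts i) t') :
    Rewrites Rr (app f ts) (app f (Function.update ts i t')) := by
  obtain ⟨p, l, r, σ, hR, hsub, hrep⟩ := h
  refine ⟨(i : ℕ) :: p, l, r, σ, hR, ?_, ?_⟩
  · rwa [subtermAt_cons]
  · rw [replaceAt_cons, hrep]
    rfl

theorem rewritesStar_app_update {f : F} {ts : Fin (ar f) → Term F ar} {i : Fin (ar f)}
    {t' : Term F ar} (h : RewritesStar Rr (ts i) t') :
    RewritesStar Rr (app f ts) (app f (Function.update ts i t')) := by
  have step : ∀ u v, Rewrites Rr u v →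
      Rewrites Rr (app f (Function.update ts i u)) (app f (Function.update ts i v)) :=
    fun u v huv => by
      simpa using Rewrites.app_update (ts := Function.update ts i u) (i := i)
        (by rwa [Function.update_self])
  have := Relation.ReflTransGen.lift _ step _ _ h
  simpa [Function.onFun] using this

theorem rewritesStar_app {f : F} {ts ws : Fin (ar f) → Term F ar}
    (h : ∀ i, RewritesStar Rr (ts i) (ws i)) : RewritesStar Rr (app f ts) (app f ws) := by
  classical
  have hS : ∀ S : Finset (Fin (ar f)),
      RewritesStar Rr (app f ts) (app f fun i => if i ∈ S then ws i else ts i) := by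
    intro S
    induction S using Finset.induction with
    | empty => simpa using Relation.ReflTransGen.refl
    | @insert j S hj ih =>
        have hupd : (fun i => if i ∈ insert j S then ws i else ts i)
            = Function.update (fun i => if i ∈ S then ws i else ts i) j (ws j) := by
          funext k
          rcases eq_or_ne k j with rfl | hk <;> simp [*]
        rw [hupd]
        exact ih.trans (rewritesStar_app_update (by simpa [hj] using h j))
  simpa using hS Finset.univ

theorem rewrites_of_mem {l r : Term F ar} (hR : (l, r) ∈ Rr)
    (hdisj : ∀ n ∈ r.vars, n ∉ l.vars) (σ τ : ℕ → Term F ar) :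
    Rewrites Rr (l.subst σ) (r.subst τ) := by
  classical
  refine ⟨[], l, r, fun n => if n ∈ l.vars then σ n else τ n, hR, ?_, ?_⟩
  · rw [subtermAt_nil, subst_congr fun n hn => if_pos hn]
  · rw [replaceAt_nil, subst_congr fun n hn => if_neg (hdisj n hn)]

end Rewriting

section Lift

variable {F : Type} {ar : F → ℕ}

theorem liftB_app (f : F) (ts : Fin (ar f) → Term F ar) :
    liftB (app f ts) = app (some f) fun i => liftB (ts i) := rfl

theorem vars_liftB (t : Term F ar) : (liftB t).vars = t.vars := by
  induction t with
  | var n => rfl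
  | app f ts ih => simp only [liftB_app, vars]; exact congrArg _ (funext ih)

theorem ground_liftB {t : Term F ar} : (liftB t).Ground ↔ t.Ground := by
  rw [Ground, Ground, vars_liftB]

theorem Term.Linear.liftB {t : Term F ar} (h : t.Linear) : (_root_.liftB t).Linear := by
  have count_liftB : ∀ (t : Term F ar) n, (_root_.liftB t).count n = t.count n := by
    intro t n
    induction t with
    | var m => rfl
    | app f ts ih => simp only [liftB_app, count]; exact Finset.sum_congr rfl fun i _ => ih i
  exact fun n => (count_liftB t n).trans_le (h n)

theorem liftB_subst (t : Term F ar) (σ : ℕ → Term F ar) :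
    liftB (t.subst σ) = (liftB t).subst fun n => liftB (σ n) := by
  induction t with
  | var n => rfl
  | app f ts ih => exact congrArg (app (some f)) (funext ih)

theorem subtermAt_liftB (t : Term F ar) (p : List ℕ) :
    (liftB t).subtermAt p = (t.subtermAt p).map liftB := by
  induction p generalizing t with
  | nil => simp [subtermAt_nil]
  | cons i p ih =>
      cases t with
      | var n => rfl
      | app f ts =>
          by_cases hi : i < ar f
          · exact (subtermAt_cons (f := some f) (fun j => liftB (ts j)) ⟨i, hi⟩ p).trans
              ((ih _).trans (congrArg _ (subtermAt_cons ts ⟨i, hi⟩ p).symm))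
          · simp [liftB_app, Term.subtermAt, arB, hi]

theorem replaceAt_liftB_cons {f : F} {ts : Fin (ar f) → Term F ar} (i : Fin (ar f))
    {p : List ℕ} {b u : Term (Option F) (arB ar)}
    (h : (liftB (ts i)).replaceAt p b = some u) :
    (liftB (app f ts)).replaceAt ((i : ℕ) :: p) b
      = some (app (some f) (Function.update (fun j => liftB (ts j)) i u)) := by
  exact (replaceAt_cons (f := some f) (fun j => liftB (ts j)) i p b).trans (by
    erw [h]; rfl)

end Lift

section Automata

variable {F : Type} {ar : F → ℕ} {Q : Type} {Δ Δ' : Set (TARule F ar Q)}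

theorem Reaches.mono (hsub : Δ ⊆ Δ') {t : Term F ar} {q : Q} (h : Reaches Δ t q) :
    Reaches Δ' t q := by
  induction h with
  | app _ hrule ih => exact Reaches.app ih (hsub hrule)

theorem ReachesT.mono (hsub : Δ ⊆ Δ') {θ : ℕ → Q} {t : Term F ar} {q : Q}
    (h : ReachesT Δ θ t q) : ReachesT Δ' θ t q := by
  induction h with
  | var n => exact ReachesT.var n
  | app _ hrule ih => exact ReachesT.app ih (hsub hrule)

theorem Reaches.ground {t : Term F ar} {q : Q} (h : Reaches Δ t q) : t.Ground := by
  induction h with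
  | app _ _ ih => exact ground_app_iff.2 ih

theorem Reaches.reachesT {θ : ℕ → Q} {t : Term F ar} {q : Q} (h : Reaches Δ t q) :
    ReachesT Δ θ t q := by
  induction h with
  | app _ hrule ih => exact ReachesT.app ih hrule

theorem ReachesT.reaches {θ : ℕ → Q} {t : Term F ar} {q : Q} (h : ReachesT Δ θ t q)
    (hg : t.Ground) : Reaches Δ t q := by
  induction h with
  | var n => exact absurd hg (not_ground_var n)
  | app _ hrule ih => exact Reaches.app (fun i => ih i (ground_app_iff.1 hg i)) hrule

theorem ReachesT.congr {θ θ' : ℕ → Q} {t : Term F ar} {q : Q} (h : ReachesT Δ θ t q)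
    (hc : ∀ n ∈ t.vars, θ n = θ' n) : ReachesT Δ θ' t q := by
  induction h with
  | var n => exact hc n (Finset.mem_singleton_self n) ▸ ReachesT.var n
  | app _ hrule ih =>
      exact ReachesT.app (fun i => ih i fun n hn =>
        hc n (Finset.mem_biUnion.2 ⟨i, Finset.mem_univ i, hn⟩)) hrule

theorem ReachesT.reaches_subst {θ : ℕ → Q} {σ : ℕ → Term F ar} {t : Term F ar} {q : Q}
    (h : ReachesT Δ θ t q) (hσ : ∀ n ∈ t.vars, Reaches Δ (σ n) (θ n)) :
    Reaches Δ (t.subst σ) q := by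
  induction h with
  | var n => exact hσ n (Finset.mem_singleton_self n)
  | app _ hrule ih =>
      exact Reaches.app (fun i => ih i fun n hn =>
        hσ n (Finset.mem_biUnion.2 ⟨i, Finset.mem_univ i, hn⟩)) hrule

theorem Reaches.exists_reachesT_of_subst {σ : ℕ → Term F ar} {t : Term F ar} {q : Q}
    (hlin : t.Linear) (h : Reaches Δ (t.subst σ) q) :
    ∃ θ : ℕ → Q, ReachesT Δ θ t q ∧ ∀ n ∈ t.vars, Reaches Δ (σ n) (θ n) := by
  classical
  induction t generalizing q with
  | var n =>
      exact ⟨fun _ => q, ReachesT.var n, fun m hm => by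
        rw [Finset.mem_singleton.1 hm]; exact h⟩
  | app f ts ih =>
      cases h with
      | app hargs hrule =>
          choose θs hθT hθσ using fun i => ih i (hlin.arg i) (hargs i)
          let θ : ℕ → Q := fun m =>
            if hm : ∃ i, m ∈ (ts i).vars then θs hm.choose m else q
          have hθ : ∀ i, ∀ m ∈ (ts i).vars, θ m = θs i m := fun i m hm => by
            have hex : ∃ j, m ∈ (ts j).vars := ⟨i, hm⟩
            simp only [θ, dif_pos hex, hlin.eq_of_mem_vars hex.choose_spec hm]
          refine ⟨θ, ReachesT.app (fun i => (hθT i).congr fun m hm => (hθ i m hm).symm) hrule,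
            fun m hm => ?_⟩
          obtain ⟨i, -, hm⟩ := Finset.mem_biUnion.1 hm
          exact hθ i m hm ▸ hθσ i m hm

theorem dn_app {f : F} {ts : Fin (ar f) → Term F ar} :
    dn Δ (app f ts) = oneStep Δ f fun i => dn Δ (ts i) := by
  ext q
  constructor
  · rintro (⟨hargs, hrule⟩)
    exact ⟨_, hargs, hrule⟩
  · rintro ⟨qs, hargs, hrule⟩
    exact Reaches.app hargs hrule

theorem ReachesT.exists_of_iUnion {Γ : ℕ → Set (TARule F ar Q)} (hmono : Monotone Γ)
    {θ : ℕ → Q} {t : Term F ar} {q : Q} (h : ReachesT (⋃ n, Γ n) θ t q) :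
    ∃ n, ReachesT (Γ n) θ t q := by
  classical
  induction h with
  | var n => exact ⟨0, ReachesT.var n⟩
  | @app f ts qs q _ hrule ih =>
      obtain ⟨m, hm⟩ := Set.mem_iUnion.1 hrule
      choose ns hns using ih
      refine ⟨max m (Finset.univ.sup ns),
        ReachesT.app (fun i => ?_) (hmono (le_max_left _ _) hm)⟩
      exact (hns i).mono (hmono (le_max_of_le_right (Finset.le_sup (Finset.mem_univ i))))

theorem Reaches.exists_of_iUnion {Γ : ℕ → Set (TARule F ar Q)} (hmono : Monotone Γ)
    {t : Term F ar} {q : Q} (h : Reaches (⋃ n, Γ n) t q) : ∃ n, Reaches (Γ n) t q :=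
  have ⟨n, hn⟩ := ReachesT.exists_of_iUnion hmono (h.reachesT (θ := fun _ => q))
  ⟨n, hn.reaches h.ground⟩

theorem Reaches.of_replaceAt {p : List ℕ} {w a b w' : Term F ar} {q : Q}
    (h1 : w.subtermAt p = some a) (h2 : w.replaceAt p b = some w')
    (hab : ∀ q', Reaches Δ b q' → Reaches Δ a q') (h : Reaches Δ w' q) : Reaches Δ w q := by
  induction p generalizing w w' q with
  | nil =>
      rw [subtermAt_nil, Option.some.injEq] at h1
      rw [replaceAt_nil, Option.some.injEq] at h2
      subst h1 h2
      exact hab q h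
  | cons i p ih =>
      cases w with
      | var n => simp [Term.subtermAt] at h1
      | app f ts =>
          obtain ⟨hi, h1⟩ := subtermAt_cons_eq_some.1 h1
          rw [show i = ((⟨i, hi⟩ : Fin (ar f)) : ℕ) from rfl, replaceAt_cons] at h2
          obtain ⟨s, hs, rfl⟩ := Option.map_eq_some_iff.1 h2
          obtain ⟨hargs, hrule⟩ := h
          refine Reaches.app (fun j => ?_) hrule
          rcases eq_or_ne j ⟨i, hi⟩ with rfl | hne
          · exact ih h1 hs (by simpa using hargs ⟨i, hi⟩)
          · simpa [hne] using hargs j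

theorem reaches_of_forall_mem {qx : Q}
    (hp : ∀ f : F, (⟨f, fun _ => qx, qx⟩ : TARule F ar Q) ∈ Δ) {w : Term F ar}
    (hg : w.Ground) : Reaches Δ w qx := by
  induction w with
  | var n => exact absurd hg (not_ground_var n)
  | app f ts ih => exact Reaches.app (fun i => ih i (ground_app_iff.1 hg i)) (hp f)

theorem Reaches.app_update {g : F} {ts : Fin (ar g) → Term F ar} {i : Fin (ar g)}
    {u : Term F ar} {qs : Fin (ar g) → Q} {q : Q}
    (hrule : (⟨g, qs, q⟩ : TARule F ar Q) ∈ Δ)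
    (hu : Reaches Δ u (qs i)) (hrest : ∀ j, j ≠ i → Reaches Δ (ts j) (qs j)) :
    Reaches Δ (Term.app g (Function.update ts i u)) q := by
  refine Reaches.app (fun j => ?_) hrule
  by_cases hj : j = i
  · subst hj
    simpa using hu
  · simpa [hj] using hrest j hj

theorem Reaches.exists_of_replaceAt_cons {g : F} {ts : Fin (ar g) → Term F ar}
    {i : Fin (ar g)} {p : List ℕ} {b w : Term F ar} {q : Q}
    (hrep : (Term.app g ts).replaceAt ((i : ℕ) :: p) b = some w) (h : Reaches Δ w q) :
    ∃ (u : Term F ar) (qs : Fin (ar g) → Q), (ts i).replaceAt p b = some u ∧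
      (⟨g, qs, q⟩ : TARule F ar Q) ∈ Δ ∧ Reaches Δ u (qs i) ∧
      ∀ j, j ≠ i → Reaches Δ (ts j) (qs j) := by
  rw [replaceAt_cons] at hrep
  obtain ⟨u, hu, rfl⟩ := Option.map_eq_some_iff.1 hrep
  obtain ⟨hargs, hrule⟩ := h
  exact ⟨u, _, hu, hrule, by simpa using hargs i, fun j hj => by simpa [hj] using hargs j⟩

theorem TARule.target_eq {f g : F} {qs : Fin (ar f) → Q} {ds : Fin (ar g) → Q} {q d : Q}
    (h : (⟨f, qs, q⟩ : TARule F ar Q) = ⟨g, ds, d⟩) : q = d := by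
  cases h
  rfl

end Automata

def TRS.RhsVarsFresh {F : Type} {ar : F → ℕ} (R : TRS F ar) : Prop :=
  ∀ lr ∈ R.rules, ∀ n ∈ lr.2.vars, n ∉ lr.1.vars

namespace TRS

variable {F : Type} {ar : F → ℕ} {S : TRS F ar}

theorem exists_app_of_mem {lr : Term F ar × Term F ar} (h : lr ∈ S.rules) :
    ∃ (g : F) (ls : Fin (ar g) → Term F ar), lr.1 = app g ls := by
  cases hl : lr.1 with
  | var m => exact absurd hl (S.lhs_not_var lr h m)
  | app g ls => exact ⟨g, ls, rfl⟩

theorem mem_SR_of_mem {g : F} {ls : Fin (ar g) → Term F ar} {r : Term F ar}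
    (h : (app g ls, r) ∈ S.rules) (i : Fin (ar g)) : ls i ∈ SR S :=
  ⟨_, h, g, ls, rfl, i, [], subtermAt_nil _⟩

theorem mem_SR_of_app_mem {g : F} {bs : Fin (ar g) → Term F ar} (h : app g bs ∈ SR S)
    (i : Fin (ar g)) : bs i ∈ SR S := by
  obtain ⟨lr, hlr, f, ts, hl, j, p, hp⟩ := h
  exact ⟨lr, hlr, f, ts, hl, j, p ++ [(i : ℕ)], subtermAt_append hp (by simp [subtermAt])⟩

theorem isRedex_app_iff {g : F} {ts : Fin (ar g) → Term F ar} :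
    S.IsRedex (app g ts) ↔
      ∃ ls r, (app g ls, r) ∈ S.rules ∧ ∃ σ, app g ts = (app g ls).subst σ := by
  constructor
  · rintro ⟨lr, hR, σ, heq⟩
    obtain ⟨g', ls, hl⟩ := exists_app_of_mem hR
    rw [hl] at heq
    obtain ⟨rfl, -⟩ := Term.app.inj heq
    exact ⟨ls, lr.2, hl ▸ hR, σ, heq⟩
  · rintro ⟨ls, r, hR, σ, heq⟩
    exact ⟨_, hR, σ, heq⟩

theorem LeftLinear.linear_of_mem_SR (hll : S.LeftLinear) {b : Term F ar} (h : b ∈ SR S) :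
    b.Linear := by
  obtain ⟨lr, hlr, f, ts, hl, j, p, hp⟩ := h
  exact ((hl ▸ hll lr hlr).arg j).subtermAt hp

end TRS

open TRS

section Patterns

variable {F : Type} {ar : F → ℕ} {Q : Type} {S : TRS F ar} {Δ : Set (TARule F ar Q)}
  {enc : Term F ar → Q}

theorem stPattern_mem_BStateSet {b : Term F ar} (h : b ∈ SR S) :
    stPattern b ∈ BStateSet S :=
  Or.inl ⟨b, h, rfl⟩

theorem var_zero_mem_BStateSet : (var 0 : Term F ar) ∈ BStateSet S :=
  Or.inr rfl

theorem satArg_eq_of_rhsVarsFresh (hfresh : S.RhsVarsFresh) {g : F}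
    {ls : Fin (ar g) → Term F ar} {r : Term F ar} (hR : (app g ls, r) ∈ S.rules)
    (θ : ℕ → Q) (i : Fin (ar g)) :
    satArg enc θ r.vars (ls i) = enc (stPattern (ls i)) := by
  cases hls : ls i with
  | var n =>
      refine if_neg fun hn => hfresh _ hR n hn (Finset.mem_biUnion.2 ⟨i, Finset.mem_univ i, ?_⟩)
      simp [hls, vars]
  | app _ _ => rfl

theorem reaches_subst_stPattern (hmatch : BMatch S enc ⊆ Δ)
    (hx : ∀ w : Term F ar, w.Ground → Reaches Δ w (enc (var 0))) {b : Term F ar}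
    (hb : b ∈ SR S) {σ : ℕ → Term F ar} (hg : (b.subst σ).Ground) :
    Reaches Δ (b.subst σ) (enc (stPattern b)) := by
  induction b with
  | var n => exact hx _ hg
  | app f bs ih =>
      exact Reaches.app (fun i => ih i (mem_SR_of_app_mem hb i) (ground_app_iff.1 hg i))
        (hmatch ⟨f, bs, hb, rfl⟩)

/-- `hΔ` says that the only rules of `Δ` into a state `⟨b⟩`, `b` not a variable, are the
matching rules of `ℬ(S)`. -/
theorem Reaches.exists_subst_of_stPattern (hll : S.LeftLinear)
    (hΔ : ∀ (f : F) (qs : Fin (ar f) → Q) (g : F) (bs : Fin (ar g) → Term F ar),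
      Term.app g bs ∈ SR S → (⟨f, qs, enc (Term.app g bs)⟩ : TARule F ar Q) ∈ Δ →
      ∃ ts : Fin (ar f) → Term F ar,
        Term.app g bs = Term.app f ts ∧ ∀ i, qs i = enc (stPattern (ts i)))
    {w : Term F ar} {b : Term F ar} (hb : b ∈ SR S) (h : Reaches Δ w (enc (stPattern b))) :
    ∃ σ, w = b.subst σ := by
  generalize hq : enc (stPattern b) = q at h
  induction h generalizing b with
  | @app f ws qs q _ hrule ih =>
      cases b with
      | var n => exact ⟨fun _ => Term.app f ws, rfl⟩
      | app g bs =>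
          obtain ⟨ts, hts, hqs⟩ := hΔ f qs g bs hb (hq ▸ hrule)
          obtain ⟨rfl, hbs⟩ := Term.app.inj hts
          subst hbs
          exact (hll.linear_of_mem_SR hb).exists_subst_app fun i =>
            ih i (mem_SR_of_app_mem hb i) (hqs i).symm

end Patterns

/-! ## Saturation -/

section Saturation

variable {G : Type} {arG : G → ℕ} {Q : Type} {S : TRS G arG} {enc : Term G arG → Q}
  {Qc : Set Q} {Γ0 : Set (TARule G arG Q)}

theorem monotone_iterate_satStep : Monotone fun n => (satStep S enc Qc)^[n] Γ0 :=
  monotone_nat_of_le_succ fun n => by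
    rw [Function.iterate_succ_apply']
    exact Set.subset_union_left

theorem iterate_satStep_subset_satGamma (n : ℕ) :
    (satStep S enc Qc)^[n] Γ0 ⊆ satGamma S enc Qc Γ0 :=
  Set.subset_iUnion (fun n => (satStep S enc Qc)^[n] Γ0) n

theorem subset_satGamma : Γ0 ⊆ satGamma S enc Qc Γ0 :=
  iterate_satStep_subset_satGamma 0

theorem satRule_mem_satGamma {g : G} {ls : Fin (arG g) → Term G arG} {r : Term G arG}
    {θ : ℕ → Q} {q : Q} (hR : (app g ls, r) ∈ S.rules) (hθ : ∀ n ∈ r.vars, θ n ∈ Qc)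
    (h : ReachesT (satGamma S enc Qc Γ0) θ r q) :
    (⟨g, fun i => satArg enc θ r.vars (ls i), q⟩ : TARule G arG Q) ∈
      satGamma S enc Qc Γ0 := by
  obtain ⟨m, hm⟩ := ReachesT.exists_of_iUnion monotone_iterate_satStep h
  refine iterate_satStep_subset_satGamma (m + 1) ?_
  rw [Function.iterate_succ_apply']
  exact Or.inr ⟨g, ls, r, θ, q, hR, hθ, hm, rfl⟩

theorem satGamma_induction {P : TARule G arG Q → Prop} (h0 : ∀ ρ ∈ Γ0, P ρ)
    (hstep : ∀ Γ, (∀ ρ ∈ Γ, P ρ) → ∀ ρ ∈ satStep S enc Qc Γ, P ρ) :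
    ∀ ρ ∈ satGamma S enc Qc Γ0, P ρ := by
  have hiter : ∀ n, ∀ ρ ∈ (satStep S enc Qc)^[n] Γ0, P ρ := by
    intro n
    induction n with
    | zero => exact h0
    | succ n ih => rw [Function.iterate_succ_apply']; exact hstep _ ih
  exact fun ρ hρ => have ⟨n, hn⟩ := Set.mem_iUnion.1 hρ; hiter n ρ hn

end Saturation

theorem reaches_BTrans_var_zero {G : Type} {arG : G → ℕ} {Q : Type} (S : TRS G arG)
    (enc : Term G arG → Q) {w : Term G arG} (hg : w.Ground) :
    Reaches (BTrans S enc) w (enc (var 0)) :=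
  reaches_of_forall_mem (fun f => Or.inr ⟨f, rfl⟩) hg

namespace CSetup

variable {G : Type} [Fintype G] {arG : G → ℕ} {Q : Type} [Fintype Q]
  {Rg : TRS G arG} {T : Set (Term G arG)} (C : CSetup Q Rg T)

theorem A_subset_Γsat : C.A.trans ⊆ C.Γsat :=
  Set.subset_union_left.trans subset_satGamma

theorem BTrans_subset_Γsat : BTrans Rg C.enc ⊆ C.Γsat :=
  Set.subset_union_right.trans subset_satGamma

theorem mem_states_of_mem_BTrans {ρ : TARule G arG Q} (hρ : ρ ∈ BTrans Rg C.enc) :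
    ρ.2.2 ∈ C.enc '' BStateSet Rg ∧ ∀ i, ρ.2.1 i ∈ C.enc '' BStateSet Rg := by
  rcases hρ with ⟨f, ts, hSR, rfl⟩ | ⟨f, rfl⟩
  · exact ⟨⟨_, stPattern_mem_BStateSet hSR, rfl⟩,
      fun i => ⟨_, stPattern_mem_BStateSet (mem_SR_of_app_mem hSR i), rfl⟩⟩
  · exact ⟨⟨_, var_zero_mem_BStateSet, rfl⟩, fun _ => ⟨_, var_zero_mem_BStateSet, rfl⟩⟩

theorem mem_Qstates_of_mem_Γsat {ρ : TARule G arG Q} (hρ : ρ ∈ C.Γsat) :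
    ρ.2.2 ∈ C.Qstates ∧ ∀ i, ρ.2.1 i ∈ C.Qstates := by
  refine satGamma_induction (P := fun ρ => ρ.2.2 ∈ C.Qstates ∧ ∀ i, ρ.2.1 i ∈ C.Qstates)
    (fun ρ hρ => ?_) (fun Γ ih ρ hρ => ?_) ρ hρ
  · rcases hρ with hA | hB
    · exact ⟨Or.inl (C.hAstates ρ hA).1, fun i => Or.inl ((C.hAstates ρ hA).2 i)⟩
    · exact ⟨Or.inr (C.mem_states_of_mem_BTrans hB).1,
        fun i => Or.inr ((C.mem_states_of_mem_BTrans hB).2 i)⟩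
  · rcases hρ with hρ | ⟨f, ls, r, θ, q, hR, hθ, hreach, rfl⟩
    · exact ih ρ hρ
    refine ⟨?_, fun i => ?_⟩
    · cases hreach with
      | var n => exact hθ n (Finset.mem_singleton_self n)
      | app _ hrule => exact (ih _ hrule).1
    · have hSR := mem_SR_of_mem hR i
      show satArg C.enc θ r.vars (ls i) ∈ C.Qstates
      cases hls : ls i with
      | var n =>
          show (if n ∈ r.vars then θ n else C.enc (var 0)) ∈ C.Qstates
          split_ifs with hn
          exacts [hθ n hn, Or.inr ⟨_, var_zero_mem_BStateSet, rfl⟩]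
      | app g bs => exact Or.inr ⟨_, stPattern_mem_BStateSet (hls ▸ hSR), rfl⟩

theorem mem_Qstates_of_reaches_Γsat {t : Term G arG} {q : Q} (h : Reaches C.Γsat t q) :
    q ∈ C.Qstates := by
  cases h with
  | app _ hrule => exact (C.mem_Qstates_of_mem_Γsat hrule).1

theorem exists_subst_of_reaches_BTrans (hll : Rg.LeftLinear) {w b : Term G arG}
    (hb : b ∈ SR Rg) (h : Reaches (BTrans Rg C.enc) w (C.enc (stPattern b))) :
    ∃ σ, w = b.subst σ := by
  refine h.exists_subst_of_stPattern hll (fun f qs g bs hbs hρ => ?_) hb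
  have hmem : app g bs ∈ BStateSet Rg := stPattern_mem_BStateSet hbs
  rcases hρ with ⟨f', ts, hSR, heq⟩ | ⟨f', heq⟩
  · obtain ⟨rfl, heq⟩ := Sigma.mk.inj_iff.1 heq
    obtain ⟨hqs, hq⟩ := Prod.mk.inj (eq_of_heq heq)
    exact ⟨ts, C.henc hmem (stPattern_mem_BStateSet hSR) hq, congrFun hqs⟩
  · exact absurd (C.henc hmem var_zero_mem_BStateSet (TARule.target_eq heq)) (by simp)

/-- Shared states accept the same terms in `𝒜_T` and `ℬ(ℛ)`, so a run of their union
splits into a run of one of them. -/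
theorem reaches_A_and_BTrans_of_reaches_Γ0 {w : Term G arG} {q : Q}
    (h : Reaches C.Γ0 w q) :
    (q ∈ C.QA → Reaches C.A.trans w q) ∧
      (q ∈ C.enc '' BStateSet Rg → Reaches (BTrans Rg C.enc) w q) := by
  induction h with
  | @app f ts qs q _ hrule ih =>
      rcases hrule with hA | hB
      · have hAr : Reaches C.A.trans (app f ts) q :=
          Reaches.app (fun i => (ih i).1 ((C.hAstates _ hA).2 i)) hA
        exact ⟨fun _ => hAr, fun hq => (C.hshared q ⟨(C.hAstates _ hA).1, hq⟩ _).1 hAr⟩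
      · have hBr : Reaches (BTrans Rg C.enc) (app f ts) q :=
          Reaches.app (fun i => (ih i).2 ((C.mem_states_of_mem_BTrans hB).2 i)) hB
        exact ⟨fun hq => (C.hshared q ⟨hq, (C.mem_states_of_mem_BTrans hB).1⟩ _).2 hBr,
          fun _ => hBr⟩

theorem exists_ground_reaches_Γ0 {q : Q} (hq : q ∈ C.Qstates) :
    ∃ u : Term G arG, u.Ground ∧ Reaches C.Γ0 u q := by
  obtain ⟨s0, hs0⟩ := C.hground
  rcases hq with hQA | ⟨b, ⟨b0, hb0, rfl⟩ | rfl, rfl⟩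
  · obtain ⟨u, hg, hr⟩ := C.hacc q hQA
    exact ⟨u, hg, hr.mono Set.subset_union_left⟩
  · have hg : (b0.subst fun _ => s0).Ground := ground_subst fun _ => hs0
    exact ⟨_, hg, (reaches_subst_stPattern Set.subset_union_left
      (fun w hw => reaches_BTrans_var_zero Rg C.enc hw) hb0 hg).mono Set.subset_union_right⟩
  · exact ⟨s0, hs0, (reaches_BTrans_var_zero Rg C.enc hs0).mono Set.subset_union_right⟩

theorem exists_rewrites_of_satRule (hll : Rg.LeftLinear) (hfresh : Rg.RhsVarsFresh)
    {Γ : Set (TARule G arG Q)} (hΓ : C.Γ0 ⊆ Γ) {g : G} {ls ws : Fin (arG g) → Term G arG}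
    {r : Term G arG} {θ : ℕ → Q} {q : Q} (hR : (app g ls, r) ∈ Rg.rules)
    (hθ : ∀ n ∈ r.vars, θ n ∈ C.Qstates) (hreach : ReachesT Γ θ r q)
    (hws : ∀ i, Reaches C.Γ0 (ws i) (satArg C.enc θ r.vars (ls i))) :
    ∃ w', Rewrites Rg.rules (app g ws) w' ∧ w'.Ground ∧ Reaches Γ w' q := by
  obtain ⟨σ, hσ⟩ := (hll _ hR).exists_subst_app fun i => by
    have hSR := mem_SR_of_mem hR i
    have hwi := hws i
    rw [satArg_eq_of_rhsVarsFresh hfresh hR] at hwi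
    exact C.exists_subst_of_reaches_BTrans hll hSR
      ((C.reaches_A_and_BTrans_of_reaches_Γ0 hwi).2 ⟨_, stPattern_mem_BStateSet hSR, rfl⟩)
  have hτ : ∀ m, ∃ u : Term G arG, u.Ground ∧ (m ∈ r.vars → Reaches C.Γ0 u (θ m)) := by
    intro m
    by_cases hm : m ∈ r.vars
    · obtain ⟨u, hu, hr⟩ := C.exists_ground_reaches_Γ0 (hθ m hm)
      exact ⟨u, hu, fun _ => hr⟩
    · obtain ⟨s0, hs0⟩ := C.hground
      exact ⟨s0, hs0, fun h => absurd h hm⟩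
  choose τ hτg hτr using hτ
  exact ⟨r.subst τ, hσ ▸ rewrites_of_mem hR (hfresh _ hR) σ τ, ground_subst hτg,
    hreach.reaches_subst fun m hm => (hτr m hm).mono hΓ⟩

theorem exists_rewritesStar_of_reaches_iterate (hll : Rg.LeftLinear)
    (hfresh : Rg.RhsVarsFresh) (n : ℕ) {w : Term G arG} {q : Q}
    (h : Reaches ((satStep Rg C.enc C.Qstates)^[n] C.Γ0) w q) (hg : w.Ground) :
    ∃ w', RewritesStar Rg.rules w w' ∧ w'.Ground ∧ Reaches C.Γ0 w' q := by
  induction n generalizing w q with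
  | zero => exact ⟨w, Relation.ReflTransGen.refl, hg, h⟩
  | succ n ih =>
      have hsub : C.Γ0 ⊆ (satStep Rg C.enc C.Qstates)^[n] C.Γ0 :=
        monotone_iterate_satStep (Nat.zero_le n)
      rw [Function.iterate_succ_apply'] at h
      induction h with
      | @app f ts qs q _ hrule ihargs =>
          choose ws hstar hwg hws using fun i => ihargs i (ground_app_iff.1 hg i)
          have hstar : RewritesStar Rg.rules (app f ts) (app f ws) := rewritesStar_app hstar
          rcases hrule with hprev | ⟨g, ls, r, θ, q, hR, hθ, hreach, heq⟩
          · obtain ⟨w', hstar', hw'⟩ := ih (Reaches.app (fun i => (hws i).mono hsub) hprev)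
              (ground_app_iff.2 hwg)
            exact ⟨w', hstar.trans hstar', hw'⟩
          · cases heq
            obtain ⟨w₁, hstep, hw₁g, hw₁⟩ :=
              C.exists_rewrites_of_satRule hll hfresh hsub hR hθ hreach hws
            obtain ⟨w', hstar', hw'⟩ := ih hw₁ hw₁g
            exact ⟨w', hstar.trans (Relation.ReflTransGen.head hstep hstar'), hw'⟩

theorem exists_rewritesStar_of_reaches_Γsat (hll : Rg.LeftLinear)
    (hfresh : Rg.RhsVarsFresh) {w : Term G arG} {q : Q} (h : Reaches C.Γsat w q)
    (hg : w.Ground) : ∃ w', RewritesStar Rg.rules w w' ∧ w'.Ground ∧ Reaches C.Γ0 w' q :=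
  have ⟨n, hn⟩ := Reaches.exists_of_iUnion monotone_iterate_satStep h
  C.exists_rewritesStar_of_reaches_iterate hll hfresh n hn hg

end CSetup

/-! ## The automaton `𝒞'_T(ℛ)` -/

namespace CpSetup

variable {G : Type} [Fintype G] {arG : G → ℕ} {Q : Type} [Fintype Q]
  {Rg : TRS G arG} {T : Set (Term G arG)} (C : CpSetup Q Rg T)

theorem Γsat_subset_Γ' : C.Γsat ⊆ C.Γ' := fun _ h => Or.inl (Or.inl (Or.inl h))

theorem BMatch_subset_Γ' : BMatch Rg C.enc2 ⊆ C.Γ' := fun _ h => Or.inl (Or.inl (Or.inr h))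

theorem reaches_Γ'_var_zero {w : Term G arG} (hg : w.Ground) :
    Reaches C.Γ' w (C.enc (var 0)) :=
  (reaches_BTrans_var_zero Rg C.enc hg).mono (C.BTrans_subset_Γsat.trans C.Γsat_subset_Γ')

theorem qr_not_mem_Qstates : C.qr ∉ C.Qstates := fun h =>
  Set.eq_empty_iff_forall_notMem.1 C.hfresh C.qr ⟨Or.inr rfl, h⟩

theorem enc2_app_not_mem_Qstates {g : G} {bs : Fin (arG g) → Term G arG}
    (h : app g bs ∈ SR Rg) : C.enc2 (app g bs) ∉ C.Qstates := fun hq =>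
  Set.eq_empty_iff_forall_notMem.1 C.hfresh _
    ⟨Or.inl ⟨_, ⟨stPattern_mem_BStateSet h, by simp [stPattern]⟩, rfl⟩, hq⟩

theorem qr_ne_enc2_app {g : G} {bs : Fin (arG g) → Term G arG} (h : app g bs ∈ SR Rg) :
    C.qr ≠ C.enc2 (app g bs) := fun hq =>
  C.hqr ⟨_, ⟨stPattern_mem_BStateSet h, by simp [stPattern]⟩, hq.symm⟩

/-- The rules added in `𝒞'_T(ℛ)` lead to fresh states. -/
theorem reaches_Γsat_of_reaches_Γ' {t : Term G arG} {q : Q} (h : Reaches C.Γ' t q)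
    (hq : q ∈ C.Qstates) : Reaches C.Γsat t q := by
  induction h with
  | app _ hrule ih =>
      rcases hrule with ((hsat | ⟨g, ts, hSR, heq⟩) | ⟨g, ls, r, -, heq⟩) | ⟨g, j, heq⟩
      · exact Reaches.app (fun i => ih i ((C.mem_Qstates_of_mem_Γsat hsat).2 i)) hsat
      · exact absurd (TARule.target_eq heq ▸ hq) (C.enc2_app_not_mem_Qstates hSR)
      · exact absurd (TARule.target_eq heq ▸ hq) C.qr_not_mem_Qstates
      · exact absurd (TARule.target_eq heq ▸ hq) C.qr_not_mem_Qstates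

theorem exists_subst_of_reaches_Γ' (hll : Rg.LeftLinear) {w b : Term G arG}
    (hb : b ∈ SR Rg) (h : Reaches C.Γ' w (C.enc2 (stPattern b))) : ∃ σ, w = b.subst σ := by
  refine h.exists_subst_of_stPattern hll (fun f qs g bs hbs hρ => ?_) hb
  rcases hρ with ((hsat | ⟨f', ts, hSR, heq⟩) | ⟨g', ls, r, -, heq⟩) | ⟨g', j, heq⟩
  · exact absurd (C.mem_Qstates_of_mem_Γsat hsat).1 (C.enc2_app_not_mem_Qstates hbs)
  · obtain ⟨rfl, heq⟩ := Sigma.mk.inj_iff.1 heq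
    obtain ⟨hqs, hq⟩ := Prod.mk.inj (eq_of_heq heq)
    exact ⟨ts, C.henc2 (stPattern_mem_BStateSet hbs) (stPattern_mem_BStateSet hSR) hq,
      congrFun hqs⟩
  · exact absurd (TARule.target_eq heq).symm (C.qr_ne_enc2_app hbs)
  · exact absurd (TARule.target_eq heq).symm (C.qr_ne_enc2_app hbs)

theorem lhsMatch_dn_iff_isRedex (hll : Rg.LeftLinear) {g : G}
    {ts : Fin (arG g) → Term G arG} (hg : ∀ i, (ts i).Ground) :
    LhsMatch Rg C.enc2 g (fun i => dn C.Γ' (ts i)) ↔ Rg.IsRedex (app g ts) := by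
  rw [isRedex_app_iff]
  constructor
  · rintro ⟨ls, r, hR, hmem⟩
    exact ⟨ls, r, hR, (hll _ hR).exists_subst_app fun i =>
      C.exists_subst_of_reaches_Γ' hll (mem_SR_of_mem hR i) (hmem i)⟩
  · rintro ⟨ls, r, hR, σ, heq⟩
    have hts := congrFun (eq_of_heq (Term.app.inj heq).2)
    refine ⟨ls, r, hR, fun i => ?_⟩
    show Reaches C.Γ' (ts i) _
    rw [hts i]
    exact reaches_subst_stPattern C.BMatch_subset_Γ'
      (fun w hw => C.hx ▸ C.reaches_Γ'_var_zero hw) (mem_SR_of_mem hR i) (hts i ▸ hg i)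

theorem reaches_qr_of_redexPos {w : Term G arG} (hll : Rg.LeftLinear) (hg : w.Ground)
    {p : List ℕ} (h : Rg.RedexPos w p) : Reaches C.Γ' w C.qr := by
  induction p generalizing w with
  | nil =>
      obtain ⟨u, hu, hred⟩ := h
      rw [subtermAt_nil, Option.some.injEq] at hu
      subst hu
      obtain ⟨lr, hR, σ, rfl⟩ := hred
      obtain ⟨g, ls, hl⟩ := exists_app_of_mem hR
      rw [hl] at hg ⊢
      obtain ⟨ls', r, hR', hmem⟩ := (C.lhsMatch_dn_iff_isRedex hll (ground_app_iff.1 hg)).2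
        ⟨lr, hR, σ, by rw [hl]; rfl⟩
      exact Reaches.app hmem (Or.inl (Or.inr ⟨g, ls', r, hR', rfl⟩))
  | cons i p ih =>
      obtain ⟨u, hu, hred⟩ := h
      cases w with
      | var n => simp [subtermAt] at hu
      | app g ws =>
          obtain ⟨hi, hu⟩ := subtermAt_cons_eq_some.1 hu
          have hq := ih (ground_app_iff.1 hg ⟨i, hi⟩) ⟨u, hu, hred⟩
          refine Reaches.app (fun j => ?_) (Or.inr ⟨g, ⟨i, hi⟩, rfl⟩)
          by_cases hj : j = ⟨i, hi⟩
          · simpa [hj] using hq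
          · simpa [hj] using C.reaches_Γ'_var_zero (ground_app_iff.1 hg j)

theorem exists_redexPos_of_reaches_qr (hll : Rg.LeftLinear) {w : Term G arG}
    (h : Reaches C.Γ' w C.qr) : ∃ p, Rg.RedexPos w p := by
  generalize hq : C.qr = q at h
  induction h with
  | @app f ts qs q hargs hrule ih =>
      subst hq
      rcases hrule with ((hsat | ⟨g, ts', hSR, heq⟩) | ⟨g, ls, r, hR, heq⟩) |
        ⟨g, j, heq⟩
      · exact absurd (C.mem_Qstates_of_mem_Γsat hsat).1 C.qr_not_mem_Qstates
      · exact absurd (TARule.target_eq heq) (C.qr_ne_enc2_app hSR)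
      · obtain ⟨rfl, heq⟩ := Sigma.mk.inj_iff.1 heq
        have hqs := congrFun (Prod.mk.inj (eq_of_heq heq)).1
        refine ⟨[], app f ts, subtermAt_nil _, (C.lhsMatch_dn_iff_isRedex hll
          fun i => (hargs i).ground).1 ⟨ls, r, hR, fun i => ?_⟩⟩
        exact (hqs i) ▸ hargs i
      · obtain ⟨rfl, heq⟩ := Sigma.mk.inj_iff.1 heq
        have hqs := congrFun (Prod.mk.inj (eq_of_heq heq)).1
        obtain ⟨p, hp⟩ := ih j (by simpa using (hqs j).symm)
        exact ⟨(j : ℕ) :: p, by rwa [RedexPos, subtermAt_cons]⟩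

end CpSetup

/-! ## Terms over `𝓕 ∪ {•}` -/

section Bullet

variable {F : Type} {ar : F → ℕ}

def BulletFree : Term (Option F) (arB ar) → Prop
  | var _ => True
  | app f ts => f ≠ none ∧ ∀ i, BulletFree (ts i)

theorem bulletFree_liftB (t : Term F ar) : BulletFree (liftB t) := by
  induction t with
  | var n => trivial
  | app f ts ih => exact ⟨Option.some_ne_none f, ih⟩

theorem BulletFree.subtermAt {t a : Term (Option F) (arB ar)} {p : List ℕ}
    (h : BulletFree t) (hsub : t.subtermAt p = some a) : BulletFree a := by
  induction p generalizing t with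
  | nil => rw [subtermAt_nil, Option.some.injEq] at hsub; exact hsub ▸ h
  | cons i p ih =>
      cases t with
      | var n => simp [Term.subtermAt] at hsub
      | app f ts =>
          obtain ⟨hi, hsub⟩ := subtermAt_cons_eq_some.1 hsub
          exact ih (h.2 _) hsub

theorem ground_bulletTm : (bulletTm : Term (Option F) (arB ar)).Ground :=
  ground_app_iff.2 fun i => i.elim0

theorem app_none_eq_bulletTm (ts : Fin (arB ar none) → Term (Option F) (arB ar)) :
    app none ts = bulletTm :=
  congrArg (app none) (funext fun i => i.elim0)

theorem exists_subtermAt_eq_bulletTm {t : Term (Option F) (arB ar)} (h : ¬ BulletFree t) :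
    ∃ p, t.subtermAt p = some bulletTm := by
  induction t with
  | var n => exact absurd trivial h
  | app f ts ih =>
      by_cases hf : f = none
      · subst hf
        exact ⟨[], by rw [subtermAt_nil, app_none_eq_bulletTm]⟩
      · obtain ⟨i, hi⟩ := not_forall.1 fun hall => h ⟨hf, hall⟩
        obtain ⟨p, hp⟩ := ih i hi
        exact ⟨(i : ℕ) :: p, by rwa [subtermAt_cons]⟩

theorem bulletFree_of_mem_NFset {R : TRS F ar} {t : Term (Option F) (arB ar)}
    (h : t ∈ NFset R.bullet) : BulletFree t := by
  by_contra hn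
  obtain ⟨p, hp⟩ := exists_subtermAt_eq_bulletTm hn
  refine h.2 ⟨p, bulletTm, hp, (bulletTm, bulletTm), Or.inr rfl, var, ?_⟩
  exact (app_none_eq_bulletTm _).symm

theorem exists_subst_of_liftB_eq_subst {l : Term F ar} (hlin : l.Linear) {u : Term F ar}
    {σ' : ℕ → Term (Option F) (arB ar)} (h : liftB u = (liftB l).subst σ') :
    ∃ σ, u = l.subst σ := by
  induction l generalizing u with
  | var n => exact ⟨fun _ => u, rfl⟩
  | app f ls ih =>
      cases u with
      | var m => cases h
      | app g us =>
          obtain ⟨hfg, hts⟩ := Term.app.inj h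
          cases Option.some.inj hfg
          exact hlin.exists_subst_app fun i => ih i (hlin.arg i) (congrFun (eq_of_heq hts) i)

end Bullet

namespace TRS

variable {F : Type} {ar : F → ℕ} {S : TRS F ar}

theorem exists_app_some_of_mem_liftB {lr : Term (Option F) (arB ar) × Term (Option F) (arB ar)}
    (h : lr ∈ S.liftB.rules) :
    ∃ (g : F) (ls : Fin (ar g) → Term (Option F) (arB ar)), lr.1 = app (some g) ls := by
  obtain ⟨lr0, h0, rfl⟩ := h
  obtain ⟨g, ls, hl⟩ := exists_app_of_mem h0
  exact ⟨g, fun i => _root_.liftB (ls i), show _root_.liftB lr0.1 = _ by rw [hl]; rfl⟩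

theorem LeftLinear.liftB (h : S.LeftLinear) : S.liftB.LeftLinear := by
  rintro _ ⟨lr, hlr, rfl⟩
  exact (h lr hlr).liftB

theorem RightLinear.liftB (h : S.RightLinear) : S.liftB.RightLinear := by
  rintro _ ⟨lr, hlr, rfl⟩
  exact (h lr hlr).liftB

theorem RhsVarsFresh.liftB (h : S.RhsVarsFresh) : S.liftB.RhsVarsFresh := by
  rintro _ ⟨lr, hlr, rfl⟩ n hn hn'
  exact h lr hlr n (vars_liftB lr.2 ▸ hn) (vars_liftB lr.1 ▸ hn')

theorem bulletFree_of_mem_SR_liftB {b : Term (Option F) (arB ar)} (h : b ∈ SR S.liftB) :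
    BulletFree b := by
  obtain ⟨_, ⟨lr, hlr, rfl⟩, f, ts, hl, j, p, hp⟩ := h
  have hfree : BulletFree (app f ts) := hl ▸ bulletFree_liftB lr.1
  exact hfree.2 j |>.subtermAt hp

theorem LeftLinear.isRedex_liftB_iff (hll : S.LeftLinear) {u : Term F ar} :
    S.liftB.IsRedex (_root_.liftB u) ↔ S.IsRedex u := by
  constructor
  · rintro ⟨_, ⟨lr, hlr, rfl⟩, σ', hσ'⟩
    obtain ⟨σ, hσ⟩ := exists_subst_of_liftB_eq_subst (hll lr hlr) hσ'
    exact ⟨lr, hlr, σ, hσ⟩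
  · rintro ⟨lr, hlr, σ, rfl⟩
    exact ⟨_, ⟨lr, hlr, rfl⟩, fun n => _root_.liftB (σ n), liftB_subst _ _⟩

end TRS

theorem redexPos_liftB_cons_iff {F : Type} {ar : F → ℕ} {Rg : TRS F ar} {f : F}
    {ts : Fin (ar f) → Term F ar} {i : ℕ} {p : List ℕ} :
    Rg.liftB.RedexPos (liftB (app f ts)) (i :: p) ↔
      ∃ h : i < ar f, Rg.liftB.RedexPos (liftB (ts ⟨i, h⟩)) p := by
  simp only [RedexPos, liftB_app, subtermAt_cons_eq_some]
  exact ⟨fun ⟨u, ⟨h, hu⟩, hred⟩ => ⟨h, u, hu, hred⟩,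
    fun ⟨h, u, hu, hred⟩ => ⟨u, ⟨h, hu⟩, hred⟩⟩

namespace IsGrowingApprox

variable {F : Type} {ar : F → ℕ} {R Rg : TRS F ar}

theorem leftLinear (happrox : IsGrowingApprox R Rg) (hll : R.LeftLinear) : Rg.LeftLinear := by
  intro lr hlr
  obtain ⟨lr', hlr', heq, -⟩ := happrox.2.2.1 lr hlr
  exact heq ▸ hll lr' hlr'

theorem rhsVarsFresh (happrox : IsGrowingApprox R Rg) : Rg.RhsVarsFresh := fun lr hlr => by
  obtain ⟨-, -, -, -, hfresh⟩ := happrox.2.2.1 lr hlr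
  exact hfresh

theorem isRedex_iff (happrox : IsGrowingApprox R Rg) {u : Term F ar} :
    R.IsRedex u ↔ Rg.IsRedex u := by
  constructor
  · rintro ⟨lr, hlr, σ, rfl⟩
    obtain ⟨lr', hlr', heq, -⟩ := happrox.2.2.2 lr hlr
    exact ⟨lr', hlr', σ, by rw [heq]⟩
  · rintro ⟨lr, hlr, σ, rfl⟩
    obtain ⟨lr', hlr', heq, -⟩ := happrox.2.2.1 lr hlr
    exact ⟨lr', hlr', σ, by rw [heq]⟩

theorem redexPos_liftB_iff (happrox : IsGrowingApprox R Rg) (hll : R.LeftLinear)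
    {s : Term F ar} {p : List ℕ} :
    Rg.liftB.RedexPos (liftB s) p ↔ R.RedexPos s p := by
  simp only [RedexPos, subtermAt_liftB, Option.map_eq_some_iff]
  constructor
  · rintro ⟨_, ⟨u, hu, rfl⟩, hred⟩
    exact ⟨u, hu, (happrox.isRedex_iff).2 ((happrox.leftLinear hll).isRedex_liftB_iff.1 hred)⟩
  · rintro ⟨u, hu, hred⟩
    exact ⟨_, ⟨u, hu, rfl⟩, (happrox.leftLinear hll).isRedex_liftB_iff.2
      ((happrox.isRedex_iff).1 hred)⟩

end IsGrowingApprox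

/-! ## Completeness of saturation -/

namespace CSetup

variable {F : Type} [Fintype F] {ar : F → ℕ} {Q : Type} [Fintype Q] {Rg : TRS F ar}
  {T : Set (Term (Option F) (arB ar))}

/-- Completeness of saturation already holds for these restricted rules; this is why the
single hole state `P² = {⟨x⟩}` of `𝒟(ℛ_g)` suffices. -/
def Γx (C : CSetup Q Rg.liftB T) : Set (TARule (Option F) (arB ar) Q) :=
  {ρ | ρ ∈ C.Γsat ∧ (ρ.1 = none → ρ.2.2 = C.enc (var 0))}

variable (C : CSetup Q Rg.liftB T)

theorem Γx_subset_Γsat : C.Γx ⊆ C.Γsat := fun _ h => h.1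

theorem reaches_Γx_var_zero {w : Term (Option F) (arB ar)} (hg : w.Ground) :
    Reaches C.Γx w (C.enc (var 0)) :=
  reaches_of_forall_mem (Δ := C.Γx)
    (fun f => ⟨C.BTrans_subset_Γsat (Or.inr ⟨f, rfl⟩), fun _ => rfl⟩) hg

theorem BMatch_subset_Γx : BMatch Rg.liftB C.enc ⊆ C.Γx := by
  rintro _ ⟨f, ts, hSR, rfl⟩
  exact ⟨C.BTrans_subset_Γsat (Or.inl ⟨f, ts, hSR, rfl⟩),
    fun h => absurd h (bulletFree_of_mem_SR_liftB hSR).1⟩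

theorem reaches_Γx_of_bulletFree {t : Term (Option F) (arB ar)} {q : Q}
    (h : Reaches C.Γsat t q) (hfree : BulletFree t) : Reaches C.Γx t q := by
  induction h with
  | app _ hrule ih =>
      exact Reaches.app (fun i => ih i (hfree.2 i)) ⟨hrule, fun h => absurd h hfree.1⟩

theorem eq_of_reaches_Γx_bulletTm {q : Q} (h : Reaches C.Γx bulletTm q) :
    q = C.enc (var 0) := by
  cases h with
  | app _ hrule => exact hrule.2 rfl

/-- The saturation rules make `Γx` closed under reversed root steps. -/
theorem reaches_Γx_lhs_of_reaches_rhs (hrl : Rg.RightLinear) (hfresh : Rg.RhsVarsFresh)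
    {l r : Term (Option F) (arB ar)} {σ : ℕ → Term (Option F) (arB ar)} {q : Q}
    (hR : (l, r) ∈ Rg.liftB.rules) (hg : (l.subst σ).Ground)
    (h : Reaches C.Γx (r.subst σ) q) : Reaches C.Γx (l.subst σ) q := by
  obtain ⟨θ, hθ, hθσ⟩ := h.exists_reachesT_of_subst (hrl.liftB _ hR)
  obtain ⟨g, ls, hl⟩ := exists_app_some_of_mem_liftB hR
  simp only at hl
  subst hl
  have hrule := satRule_mem_satGamma hR (fun n hn =>
    C.mem_Qstates_of_reaches_Γsat ((hθσ n hn).mono C.Γx_subset_Γsat))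
    (hθ.mono C.Γx_subset_Γsat)
  refine Reaches.app (fun i => ?_) ⟨hrule, fun h => absurd h (Option.some_ne_none g)⟩
  show Reaches C.Γx ((ls i).subst σ) (satArg C.enc θ r.vars (ls i))
  rw [satArg_eq_of_rhsVarsFresh hfresh.liftB hR]
  exact reaches_subst_stPattern C.BMatch_subset_Γx (fun w hw => C.reaches_Γx_var_zero hw)
    (mem_SR_of_mem hR i) (ground_app_iff.1 hg i)

theorem reaches_Γx_of_rewrites (hrl : Rg.RightLinear) (hfresh : Rg.RhsVarsFresh)
    {w w' : Term (Option F) (arB ar)} (hrw : Rewrites Rg.liftB.rules w w') (hg : w.Ground)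
    {q : Q} (h : Reaches C.Γx w' q) : Reaches C.Γx w q := by
  obtain ⟨p, l, r, σ, hR, hsub, hrep⟩ := hrw
  exact h.of_replaceAt hsub hrep fun q' h' =>
    C.reaches_Γx_lhs_of_reaches_rhs hrl hfresh hR (hg.subtermAt hsub) h'

end CSetup

/-- `ℛ_g`-steps may introduce variables, so the induction runs over all ground instances. -/
theorem CSetup.exists_final_of_rewritesStar {F : Type} [Fintype F] {ar : F → ℕ} {Q : Type}
    [Fintype Q] {R Rg : TRS F ar} (C : CSetup Q Rg.liftB (NFset R.bullet))
    (hrl : Rg.RightLinear) (hfresh : Rg.RhsVarsFresh) {w t : Term (Option F) (arB ar)}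
    (hstar : RewritesStar Rg.liftB.rules w t) (hNF : t ∈ NFset R.bullet)
    (γ : ℕ → Term (Option F) (arB ar)) (hγ : ∀ m, (γ m).Ground) :
    ∃ qf ∈ C.A.final, Reaches C.Γx (w.subst γ) qf := by
  induction hstar using Relation.ReflTransGen.head_induction_on with
  | refl =>
      obtain ⟨hgt, qf, hqf, hr⟩ := C.hT ▸ hNF
      rw [hgt.subst_eq]
      exact ⟨qf, hqf, C.reaches_Γx_of_bulletFree (hr.mono C.A_subset_Γsat)
        (bulletFree_of_mem_NFset hNF)⟩
  | head hstep _ ih =>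
      obtain ⟨qf, hqf, hr⟩ := ih
      exact ⟨qf, hqf,
        C.reaches_Γx_of_rewrites hrl hfresh (hstep.subst γ) (ground_subst hγ) hr⟩


/-! ## The automaton `𝒟(ℛ_g)` -/

namespace CpSetup

variable {F : Type} [Fintype F] {ar : F → ℕ} {Q : Type} [Fintype Q] {Rg : TRS F ar}
  {T : Set (Term (Option F) (arB ar))} (C : CpSetup Q Rg.liftB T)

theorem exists_of_mem_DTrans {f : F} {SP : Fin (ar f) → Set Q × Set Q} {S P : Set Q}
    (h : (⟨f, SP, (S, P)⟩ : TARule F ar (Set Q × Set Q)) ∈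
      DTrans Rg.liftB C.Γ' C.enc C.enc2) :
    ∃ P1 P2 : Set Q,
      P1 ⊆ (⋃ i : Fin (ar f), oneStep C.Γ' (some f)
              (fun j => @ite _ (j = i) (instDecidableEqFin _ j i) (SP j).2 (SP j).1)) ∧
      (∀ i, ∀ q ∈ (SP i).2, (P1 ∩ oneStep C.Γ' (some f)
        (fun j => @ite _ (j = i) (instDecidableEqFin _ j i) {q} (SP j).1)).Nonempty) ∧
      ((LhsMatch Rg.liftB C.enc2 (some f) (fun i => (SP i).1) ∧ P2 = {C.enc (var 0)}) ∨
       (¬ LhsMatch Rg.liftB C.enc2 (some f) (fun i => (SP i).1) ∧ P2 = ∅)) ∧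
      S = oneStep C.Γ' (some f) (fun i => (SP i).1) ∧ P = P1 ∪ P2 := by
  obtain ⟨f', SP', P1, P2, h1, h2, h3, heq⟩ := h
  obtain ⟨rfl, heq⟩ := Sigma.mk.inj_iff.1 heq
  obtain ⟨rfl, heq⟩ := Prod.mk.inj (eq_of_heq heq)
  obtain ⟨rfl, rfl⟩ := Prod.mk.inj heq
  exact ⟨P1, P2, h1, h2, h3, rfl, rfl⟩

theorem fst_eq_dn_of_reaches_DTrans {t : Term F ar} {SP : Set Q × Set Q}
    (h : Reaches (DTrans Rg.liftB C.Γ' C.enc C.enc2) t SP) : SP.1 = dn C.Γ' (liftB t) := by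
  induction h with
  | @app f ts qs q _ hrule ih =>
      obtain ⟨S, P⟩ := q
      obtain ⟨-, -, -, -, -, rfl, -⟩ := C.exists_of_mem_DTrans hrule
      rw [liftB_app, dn_app]
      exact congrArg (oneStep C.Γ' (some f)) (funext ih)

theorem lhsMatch_iff_isRedex_liftB (hll : Rg.LeftLinear) {f : F}
    {ts : Fin (ar f) → Term F ar} {Ss : Fin (ar f) → Set Q}
    (hS : ∀ i, Ss i = dn C.Γ' (liftB (ts i))) (hg : ∀ i, (ts i).Ground) :
    LhsMatch Rg.liftB C.enc2 (some f) Ss ↔ Rg.liftB.IsRedex (liftB (app f ts)) := by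
  obtain rfl : Ss = fun i => dn C.Γ' (liftB (ts i)) := funext hS
  exact C.lhsMatch_dn_iff_isRedex (g := some f) (ts := fun i => liftB (ts i)) hll.liftB
    fun i => ground_liftB.2 (hg i)

theorem exists_mem_snd_of_reaches_DTrans (hll : Rg.LeftLinear) {t : Term F ar}
    {SP : Set Q × Set Q} (h : Reaches (DTrans Rg.liftB C.Γ' C.enc C.enc2) t SP) {p : List ℕ}
    (hp : Rg.liftB.RedexPos (liftB t) p) :
    ∃ q ∈ SP.2, ∃ u, (liftB t).replaceAt p bulletTm = some u ∧ Reaches C.Γ' u q := by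
  induction h generalizing p with
  | @app f ts qs q hargs hrule ih =>
      obtain ⟨S, P⟩ := q
      obtain ⟨P1, P2, -, hcover, hP2, -, rfl⟩ := C.exists_of_mem_DTrans hrule
      have hS : ∀ i, (qs i).1 = dn C.Γ' (liftB (ts i)) :=
        fun i => C.fst_eq_dn_of_reaches_DTrans (hargs i)
      cases p with
      | nil =>
          obtain ⟨v, hv, hred⟩ := hp
          rw [subtermAt_nil, Option.some.injEq] at hv
          subst hv
          have hmatch := (C.lhsMatch_iff_isRedex_liftB hll hS fun i => (hargs i).ground).2 hred
          obtain ⟨-, rfl⟩ | ⟨hnm, -⟩ := hP2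
          · exact ⟨C.enc (var 0), Or.inr rfl, bulletTm, replaceAt_nil _ _,
              C.reaches_Γ'_var_zero ground_bulletTm⟩
          · exact absurd hmatch hnm
      | cons i p =>
          obtain ⟨hi, hp⟩ := redexPos_liftB_cons_iff.1 hp
          obtain ⟨q', hq', u', hrep', hreach'⟩ := ih ⟨i, hi⟩ hp
          obtain ⟨q0, hq0, qs', hsel, hrule'⟩ := hcover ⟨i, hi⟩ q' hq'
          refine ⟨q0, Or.inl hq0, _, replaceAt_liftB_cons (f := f) ⟨i, hi⟩ hrep',
            Reaches.app_update (g := some f) (ts := fun j => liftB (ts j)) (i := ⟨i, hi⟩)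
              hrule' ?_ fun j hj => ?_⟩
          · have h := hsel ⟨i, hi⟩
            dsimp only at h
            erw [if_pos rfl, Set.mem_singleton_iff] at h
            exact h ▸ hreach'
          · have h := hsel j
            dsimp only at h
            erw [if_neg hj, hS j] at h
            exact h

def HoleRunCover (t : Term F ar) (K : Set (List ℕ × Q)) : Prop :=
  (∀ pq ∈ K, Rg.liftB.RedexPos (liftB t) pq.1 ∧
    ∃ u, (liftB t).replaceAt pq.1 bulletTm = some u ∧ Reaches C.Γx u pq.2) ∧
  ∀ p, Rg.liftB.RedexPos (liftB t) p → ∃ q, (p, q) ∈ K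

def childHoleRuns {f : F} (ts : Fin (ar f) → Term F ar) (K : Set (List ℕ × Q))
    (i : Fin (ar f)) : Set (List ℕ × Q) :=
  {pq | ∃ (q : Q) (qs : Fin (arB ar (some f)) → Q), ((i : ℕ) :: pq.1, q) ∈ K ∧
    (⟨some f, qs, q⟩ : TARule (Option F) (arB ar) Q) ∈ C.Γx ∧ qs i = pq.2 ∧
    (∃ u, (liftB (ts i)).replaceAt pq.1 bulletTm = some u ∧ Reaches C.Γx u pq.2) ∧
    ∀ j, j ≠ i → Reaches C.Γx (liftB (ts j)) (qs j)}

variable {C}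

theorem HoleRunCover.mem_childHoleRuns {f : F} {ts : Fin (ar f) → Term F ar}
    {K : Set (List ℕ × Q)} (hK : C.HoleRunCover (app f ts) K) {i : Fin (ar f)}
    {p : List ℕ} {q : Q} (hpq : ((i : ℕ) :: p, q) ∈ K) :
    ∃ qs : Fin (arB ar (some f)) → Q,
      (⟨some f, qs, q⟩ : TARule (Option F) (arB ar) Q) ∈ C.Γx ∧
      (p, qs i) ∈ C.childHoleRuns ts K i ∧
      ∀ j, j ≠ i → Reaches C.Γx (liftB (ts j)) (qs j) := by
  obtain ⟨-, w, hw, hreach⟩ := hK.1 _ hpq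
  obtain ⟨u, qs, hu, hrule, hreach, hrest⟩ :=
    hreach.exists_of_replaceAt_cons (g := some f) (ts := fun j => liftB (ts j)) hw
  exact ⟨qs, hrule, ⟨q, qs, hpq, hrule, rfl, ⟨u, hu, hreach⟩, hrest⟩, hrest⟩

theorem HoleRunCover.child {f : F} {ts : Fin (ar f) → Term F ar} {K : Set (List ℕ × Q)}
    (hK : C.HoleRunCover (app f ts) K) (i : Fin (ar f)) :
    C.HoleRunCover (ts i) (C.childHoleRuns ts K i) := by
  refine ⟨fun _ ⟨_, _, hpq, _, _, hu, _⟩ =>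
    ⟨(redexPos_liftB_cons_iff.1 (hK.1 _ hpq).1).2, hu⟩, fun p hp => ?_⟩
  obtain ⟨q, hpq⟩ := hK.2 _ (redexPos_liftB_cons_iff.2 ⟨i.isLt, hp⟩)
  obtain ⟨qs, -, hmem, -⟩ := hK.mem_childHoleRuns hpq
  exact ⟨_, hmem⟩

theorem HoleRunCover.nonroot_subset {f : F} {ts : Fin (ar f) → Term F ar}
    {K : Set (List ℕ × Q)} (hK : C.HoleRunCover (app f ts) K) :
    {q | ∃ p, (p, q) ∈ K ∧ p ≠ []} ⊆ ⋃ i : Fin (ar f), oneStep C.Γ' (some f)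
      (fun j : Fin (ar f) =>
        if j = i then Prod.snd '' C.childHoleRuns ts K j else dn C.Γ' (liftB (ts j))) := by
  rintro q ⟨_ | ⟨i, p⟩, hpq, hne⟩
  · exact absurd rfl hne
  obtain ⟨hi, -⟩ := redexPos_liftB_cons_iff.1 (hK.1 _ hpq).1
  obtain ⟨qs, hrule, hmem, hrest⟩ := hK.mem_childHoleRuns (i := ⟨i, hi⟩) hpq
  refine Set.mem_iUnion.2
    ⟨⟨i, hi⟩, qs, fun (j : Fin (ar f)) => ?_, C.Γsat_subset_Γ' hrule.1⟩
  show qs j ∈ if j = ⟨i, hi⟩ then _ else _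
  split_ifs with hj
  · subst hj
    exact ⟨_, hmem, rfl⟩
  · exact (hrest j hj).mono (C.Γx_subset_Γsat.trans C.Γsat_subset_Γ')

theorem HoleRunCover.nonroot_cover {f : F} {ts : Fin (ar f) → Term F ar}
    {K : Set (List ℕ × Q)} (i : Fin (ar f)) {q' : Q}
    (hq' : q' ∈ Prod.snd '' C.childHoleRuns ts K i) :
    ({q | ∃ p, (p, q) ∈ K ∧ p ≠ []} ∩ oneStep C.Γ' (some f)
      (fun j : Fin (ar f) => if j = i then {q'} else dn C.Γ' (liftB (ts j)))).Nonempty := by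
  obtain ⟨⟨p, _⟩, ⟨q, qs, hpq, hrule, hqs, -, hrest⟩, rfl⟩ := hq'
  refine ⟨q, ⟨_, hpq, List.cons_ne_nil _ _⟩, qs, fun (j : Fin (ar f)) => ?_,
    C.Γsat_subset_Γ' hrule.1⟩
  show qs j ∈ if j = i then _ else _
  split_ifs with hj
  · subst hj
    exact hqs
  · exact (hrest j hj).mono (C.Γx_subset_Γsat.trans C.Γsat_subset_Γ')

/-- A hole at the root is `•` itself, which reaches only `⟨x⟩` in `Γx`. -/
theorem HoleRunCover.root {f : F} {ts : Fin (ar f) → Term F ar} {K : Set (List ℕ × Q)}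
    (hK : C.HoleRunCover (app f ts) K) (hll : Rg.LeftLinear) (hg : ∀ i, (ts i).Ground) :
    (LhsMatch Rg.liftB C.enc2 (some f) (fun i => dn C.Γ' (liftB (ts i))) ∧
        {q | ([], q) ∈ K} = {C.enc (var 0)}) ∨
      (¬ LhsMatch Rg.liftB C.enc2 (some f) (fun i => dn C.Γ' (liftB (ts i))) ∧
        {q | ([], q) ∈ K} = ∅) := by
  have hroot : ∀ q, ([], q) ∈ K → q = C.enc (var 0) := fun q hq => by
    obtain ⟨-, u, hu, hreach⟩ := hK.1 _ hq
    rw [replaceAt_nil, Option.some.injEq] at hu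
    exact C.eq_of_reaches_Γx_bulletTm (hu ▸ hreach)
  have hiff := C.lhsMatch_iff_isRedex_liftB hll (fun _ => rfl) hg
  by_cases hm : LhsMatch Rg.liftB C.enc2 (some f) (fun i => dn C.Γ' (liftB (ts i)))
  · obtain ⟨q, hq⟩ := hK.2 [] ⟨_, subtermAt_nil _, hiff.1 hm⟩
    refine Or.inl ⟨hm, Set.eq_singleton_iff_unique_mem.2 ⟨?_, hroot⟩⟩
    exact (hroot q hq) ▸ hq
  · refine Or.inr ⟨hm, Set.eq_empty_iff_forall_notMem.2 fun q hq => hm (hiff.2 ?_)⟩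
    obtain ⟨⟨v, hv, hred⟩, -⟩ := hK.1 _ hq
    rw [subtermAt_nil, Option.some.injEq] at hv
    exact hv ▸ hred

theorem reaches_DTrans_of_holeRunCover (hll : Rg.LeftLinear) {t : Term F ar} (hg : t.Ground)
    {K : Set (List ℕ × Q)} (hK : C.HoleRunCover t K) :
    Reaches (DTrans Rg.liftB C.Γ' C.enc C.enc2) t (dn C.Γ' (liftB t), Prod.snd '' K) := by
  induction t generalizing K with
  | var n => exact absurd hg (not_ground_var n)
  | app f ts ih =>
      have hts := ground_app_iff.1 hg
      have hsplit :
          Prod.snd '' K = {q | ∃ p, (p, q) ∈ K ∧ p ≠ []} ∪ {q | ([], q) ∈ K} := by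
        ext q
        constructor
        · rintro ⟨⟨_ | ⟨i, p⟩, q⟩, hpq, rfl⟩
          exacts [Or.inr hpq, Or.inl ⟨_, hpq, List.cons_ne_nil _ _⟩]
        · rintro (⟨p, hpq, -⟩ | hpq)
          exacts [⟨_, hpq, rfl⟩, ⟨_, hpq, rfl⟩]
      rw [liftB_app, dn_app, hsplit]
      exact Reaches.app (fun i => ih i (hts i) (hK.child i))
        ⟨f, _, _, _, hK.nonroot_subset, fun i _ => HoleRunCover.nonroot_cover i,
          hK.root hll hts, rfl⟩

end CpSetup

theorem CpSetup.exists_rewritesStar_NF_of_reaches_final {F : Type} [Fintype F] {ar : F → ℕ}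
    {Q : Type} [Fintype Q] {R Rg : TRS F ar} (C : CpSetup Q Rg.liftB (NFset R.bullet))
    (hll : Rg.LeftLinear) (hfresh : Rg.RhsVarsFresh) {u : Term (Option F) (arB ar)} {q : Q}
    (hg : u.Ground) (h : Reaches C.Γ' u q) (hq : q ∈ C.A.final) :
    ∃ t ∈ NFset R.bullet, RewritesStar Rg.liftB.rules u t := by
  have hqA := C.hfinal hq
  obtain ⟨t, hstar, hgt, ht⟩ := C.exists_rewritesStar_of_reaches_Γsat hll.liftB hfresh.liftB
    (C.reaches_Γsat_of_reaches_Γ' h (Or.inl hqA)) hg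
  exact ⟨t, C.hT ▸ ⟨hgt, q, hq, (C.reaches_A_and_BTrans_of_reaches_Γ0 ht).1 hqA⟩, hstar⟩

theorem mem_lang_DAutomaton_iff {F : Type} [Fintype F] {ar : F → ℕ} {Q : Type} [Fintype Q]
    {R Rg : TRS F ar} (hll : R.LeftLinear) (happrox : IsGrowingApprox R Rg)
    (C : CpSetup Q Rg.liftB (NFset R.bullet)) {s : Term F ar} :
    s ∈ Lang (DAutomaton Rg.liftB C.Γ' C.enc C.enc2 C.qr C.A.final) ↔
      s.Ground ∧ R.Reducible s ∧ ∀ p, R.RedexPos s p →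
        ∃ u, (liftB s).replaceAt p bulletTm = some u ∧
          ∃ t ∈ NFset R.bullet, RewritesStar Rg.liftB.rules u t := by
  have hllg := happrox.leftLinear hll
  have hpos : ∀ {p}, Rg.liftB.RedexPos (liftB s) p ↔ R.RedexPos s p :=
    happrox.redexPos_liftB_iff hll
  have hground : ∀ {p u}, s.Ground → (liftB s).replaceAt p bulletTm = some u → u.Ground :=
    fun hg hu => (ground_liftB.2 hg).replaceAt ground_bulletTm hu
  constructor
  · rintro ⟨hg, SP, ⟨hqr, hfinal⟩, hrun⟩
    rw [C.fst_eq_dn_of_reaches_DTrans hrun] at hqr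
    obtain ⟨p, hp⟩ := C.exists_redexPos_of_reaches_qr hllg.liftB hqr
    refine ⟨hg, ⟨p, hpos.1 hp⟩, fun p hp => ?_⟩
    obtain ⟨q, hq, u, hu, hreach⟩ := C.exists_mem_snd_of_reaches_DTrans hllg hrun (hpos.2 hp)
    exact ⟨u, hu, C.exists_rewritesStar_NF_of_reaches_final hllg happrox.rhsVarsFresh
      (hground hg hu) hreach (hfinal hq)⟩
  · rintro ⟨hg, ⟨p₀, hp₀⟩, hnotNeeded⟩
    let K : Set (List ℕ × Q) := {pq | Rg.liftB.RedexPos (liftB s) pq.1 ∧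
      ∃ u, (liftB s).replaceAt pq.1 bulletTm = some u ∧ Reaches C.Γx u pq.2 ∧
        pq.2 ∈ C.A.final}
    have hK : C.HoleRunCover s K := by
      refine ⟨fun pq ⟨hp, u, hu, hreach, _⟩ => ⟨hp, u, hu, hreach⟩, fun p hp => ?_⟩
      obtain ⟨u, hu, t, hNF, hstar⟩ := hnotNeeded p (hpos.1 hp)
      obtain ⟨qf, hqf, hreach⟩ := C.exists_final_of_rewritesStar happrox.1
        happrox.rhsVarsFresh hstar hNF (fun _ => bulletTm) fun _ => ground_bulletTm
      rw [(hground hg hu).subst_eq] at hreach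
      exact ⟨qf, hp, u, hu, hreach, hqf⟩
    refine ⟨hg, (dn C.Γ' (liftB s), Prod.snd '' K), ⟨?_, ?_⟩,
      C.reaches_DTrans_of_holeRunCover hllg hg hK⟩
    · exact C.reaches_qr_of_redexPos hllg.liftB (ground_liftB.2 hg) (hpos.2 hp₀)
    · rintro _ ⟨pq, ⟨-, -, -, -, hfinal⟩, rfl⟩
      exact hfinal

/-- Let `ℛ` be a left-linear TRS over `𝓕` and `ℛ_g` a growing
approximation of `ℛ`.  Then `ℛ ∈ CBN-NF_g` — every reducible ground term in `𝒯(𝓕)`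
has an `ℛ_g`-needed redex — iff `L(𝒟(ℛ_g)) = ∅`, where `𝒟(ℛ_g)` is the powerset-pair
automaton built from `𝒞'_{NF_{ℛ•}}(ℛ_g)`. -/
theorem statement12 {F : Type} [Fintype F] {ar : F → ℕ} {Q : Type} [Fintype Q]
    (R Rg : TRS F ar) (hll : R.LeftLinear) (happrox : IsGrowingApprox R Rg)
    (C : CpSetup Q Rg.liftB (TRS.NFset R.bullet)) :
    (∀ s : Term F ar, s.Ground → R.Reducible s →
        ∃ p, R.RedexPos s p ∧
          ¬ ∃ u, (liftB s).replaceAt p bulletTm = some u ∧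
              ∃ t ∈ TRS.NFset R.bullet, RewritesStar Rg.liftB.rules u t) ↔
    Lang (DAutomaton Rg.liftB C.Γ' C.enc C.enc2 C.qr C.A.final) = ∅ := by
  simp only [Set.eq_empty_iff_forall_notMem, mem_lang_DAutomaton_iff hll happrox C]
  constructor
  · rintro hneeded s ⟨hg, hred, hnotNeeded⟩
    obtain ⟨p, hp, hnot⟩ := hneeded s hg hred
    exact hnot (hnotNeeded p hp)
  · intro hempty s hg hred
    by_contra hno
    refine hempty s ⟨hg, hred, fun p hp => ?_⟩
    by_contra hnotNeeded
    exact hno ⟨p, hp, hnotNeeded⟩
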